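/- arXiv:math/9810092 — 8 statements merged into one kernel-verified Lean document; each statement's English description precedes it below -/
import Mathlib

section
/- A Young diagram Y admits at least one filling with entries from the ordered alphabet B = {1̄ < 2̄ < ... < m̄}^op ∪ {1 < 2 < ... < n} (with m̄ < ... < 1̄ < 1 < ... < n) that is a (m,n)-semistandard tableau (rows weakly increase with strict increase on entries from {1,...,n}; columns weakly increase with strict increase on entries from {m̄,...,1̄}) if and only if Y is an (m,n)-hook Young diagram, i.e., Y has no box in position (m+1, n+1); equivalently the (m+1)-st row of Y has length at most n. -/
/-- An `(m,n)`-semistandard tableau of shape `Y` over the alphabet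
`B = {m̄ < ⋯ < 1̄ < 1 < ⋯ < n}`, coded as natural numbers `0, …, m+n-1`
(the barred letters are the codes `< m`): rows weakly increase, with equal
adjacent row entries forced to be barred; columns weakly increase, with equal
adjacent column entries forced to be unbarred. -/
def IsSSYT (m n : ℕ) (Y : YoungDiagram) (T : ℕ → ℕ → ℕ) : Prop :=
  (∀ i j, (i, j) ∈ Y → T i j < m + n) ∧
  (∀ i j, (i, j + 1) ∈ Y → T i j ≤ T i (j + 1) ∧ (T i j = T i (j + 1) → T i j < m)) ∧
  (∀ i j, (i + 1, j) ∈ Y → T i j ≤ T (i + 1) j ∧ (T i j = T (i + 1) j → m ≤ T i j))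

/-- A Young diagram admits an `(m,n)`-semistandard filling iff it is an
`(m,n)`-hook Young diagram, i.e. it has no box in position `(m+1, n+1)`
(0-indexed: `(m, n)`), equivalently its `(m+1)`-st row has length at most `n`. -/
theorem exists_ssyt_iff_hook (m n : ℕ) (Y : YoungDiagram) :
    ((∃ T : ℕ → ℕ → ℕ, IsSSYT m n Y T) ↔ (m, n) ∉ Y) ∧
      ((m, n) ∉ Y ↔ Y.rowLen m ≤ n) := by
  constructor
  · constructor
    · rintro ⟨T, hb, hr, hc⟩ hmn
      -- barred entries strictly increase down column 0
      have hcol : ∀ i, i ≤ m → T i 0 < m → i ≤ T i 0 := by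
        intro i
        induction i with
        | zero => intro _ _; exact Nat.zero_le _
        | succ i ih =>
          intro hi hlt
          have hmem : (i + 1, 0) ∈ Y := Y.up_left_mem hi (Nat.zero_le n) hmn
          obtain ⟨hle, heq⟩ := hc i 0 hmem
          have h1 : T i 0 < m := lt_of_le_of_lt hle hlt
          have h2 : i ≤ T i 0 := ih (Nat.le_of_succ_le hi) h1
          have h3 : T i 0 < T (i + 1) 0 :=
            lt_of_le_of_ne hle (fun e => absurd (heq e) (not_le_of_gt h1))
          exact Nat.lt_of_le_of_lt h2 h3
      have hTm0 : m ≤ T m 0 := by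
        by_contra h
        exact absurd (hcol m le_rfl (not_le.mp h)) (not_le.mpr (not_le.mp h))
      -- unbarred entries strictly increase along row m
      have hrow : ∀ j, j ≤ n → m + j ≤ T m j := by
        intro j
        induction j with
        | zero => intro _; simpa using hTm0
        | succ j ih =>
          intro hj
          have hmem : (m, j + 1) ∈ Y := Y.up_left_mem le_rfl hj hmn
          obtain ⟨hle, heq⟩ := hr m j hmem
          have h2 : m + j ≤ T m j := ih (Nat.le_of_succ_le hj)
          have h3 : T m j < T m (j + 1) := by
            refine lt_of_le_of_ne hle (fun e => ?_)
            exact absurd (heq e) (not_lt.mpr (le_trans (Nat.le_add_right m j) h2))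
          omega
      have := hrow n le_rfl
      have := hb m n hmn
      omega
    · intro h
      refine ⟨fun i j => if i < m then i else m + j, ?_, ?_, ?_⟩
      · intro i j hij
        by_cases hi : i < m
        · simp [hi]; omega
        · have hjn : j < n := by
            by_contra hjn
            exact h (Y.up_left_mem (not_lt.mp hi) (not_lt.mp hjn) hij)
          simp [hi]; omega
      · intro i j _
        by_cases hi : i < m <;> simp [hi] <;> omega
      · intro i j hij
        by_cases hi : i + 1 < m
        · simp [hi, Nat.lt_of_succ_lt hi] <;> omega
        · by_cases hi' : i < m <;> simp [hi, hi'] <;> omega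
  · rw [YoungDiagram.mem_iff_lt_rowLen]
    exact not_lt
end

section
/- With P̃ = {λ ∈ P : ⟨h_i, λ⟩ ≥ 0 for all i ∈ I, and ⟨h₀ − h₁ − ... − h_k, λ⟩ ≥ k whenever 1 ≤ k ≤ n−1 and ⟨h_k, λ⟩ > 0}, P̃⁺ = P̃ ∩ ⊕_b ℤ_{≥0} ε_b, and δ = Σ_{barred b} ε_b − Σ_{unbarred b} ε_b, one has P̃ = P̃⁺ + ℤ δ. -/
/-- The weight `δ = Σ_{barred b} ε_b − Σ_{unbarred b} ε_b` of `gl(m,n)`, in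
coordinates indexed by the letter codes `0, …, m+n-1`. -/
def deltaWt (m n : ℕ) : ℕ → ℤ := fun x =>
  if x < m then 1 else if x < m + n then -1 else 0

/-- The conditions defining `P̃` for `gl(m,n)`, in coordinates (see the paper
of Benkart–Kang–Kashiwara): `⟨h_i, λ⟩ ≥ 0` for all `i ∈ I` and
`⟨h₀ - h₁ - ⋯ - h_k, λ⟩ = λ_{m-1} + λ_{m+k} ≥ k` whenever `1 ≤ k ≤ n-1` and
`⟨h_k, λ⟩ > 0`. -/
def InPtilde (m n : ℕ) (l : ℕ → ℤ) : Prop :=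
  (∀ x, m + n ≤ x → l x = 0) ∧
  (∀ c, c + 1 < m → l (c + 1) ≤ l c) ∧
  (0 ≤ l (m - 1) + l m) ∧
  (∀ k, 1 ≤ k → k < n → l (m + k) ≤ l (m + k - 1)) ∧
  (∀ k, 1 ≤ k → k < n → l (m + k) < l (m + k - 1) → (k : ℤ) ≤ l (m - 1) + l (m + k))

lemma deltaWt_bar {m n x : ℕ} (hx : x < m) : deltaWt m n x = 1 := by
  simp [deltaWt, hx]

lemma deltaWt_unbar {m n x : ℕ} (hx1 : m ≤ x) (hx2 : x < m + n) :
    deltaWt m n x = -1 := by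
  simp [deltaWt, Nat.not_lt.2 hx1, hx2]

lemma deltaWt_zero {m n x : ℕ} (hx : m + n ≤ x) : deltaWt m n x = 0 := by
  have h1 : ¬ x < m := by omega
  have h2 : ¬ x < m + n := by omega
  simp [deltaWt, h1, h2]

/-- `InPtilde` is invariant under adding a multiple of `δ`. -/
lemma inPtilde_add (m n : ℕ) (hm : 0 < m) (hn : 0 < n) (l : ℕ → ℤ) (a : ℤ)
    (h : InPtilde m n l) : InPtilde m n (l + a • deltaWt m n) := by
  obtain ⟨h1, h2, h3, h4, h5⟩ := h
  have hd : ∀ x, (l + a • deltaWt m n) x = l x + a * deltaWt m n x := fun x => rfl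
  refine ⟨?_, ?_, ?_, ?_, ?_⟩
  · intro x hx
    rw [hd, deltaWt_zero hx, h1 x hx]; ring
  · intro c hc
    rw [hd, hd, deltaWt_bar hc, deltaWt_bar (by omega : c < m)]
    have := h2 c hc; linarith
  · rw [hd, hd, deltaWt_bar (by omega : m - 1 < m),
      deltaWt_unbar (le_refl m) (by omega)]
    linarith
  · intro k hk1 hk2
    rw [hd, hd, deltaWt_unbar (by omega) (by omega),
      deltaWt_unbar (by omega : m ≤ m + k - 1) (by omega)]
    have := h4 k hk1 hk2; linarith
  · intro k hk1 hk2 hlt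
    rw [hd, hd] at hlt ⊢
    rw [deltaWt_unbar (by omega) (by omega),
      deltaWt_unbar (by omega : m ≤ m + k - 1) (by omega)] at hlt
    rw [deltaWt_bar (by omega : m - 1 < m), deltaWt_unbar (by omega) (by omega)]
    have := h5 k hk1 hk2 (by linarith)
    linarith

/-- `P̃ = P̃⁺ + ℤ δ`. -/
theorem Ptilde_eq_PtildePlus_add_zdelta (m n : ℕ) (hm : 0 < m) (hn : 0 < n) :
    {l : ℕ → ℤ | InPtilde m n l}
      = {l : ℕ → ℤ | ∃ (μ : ℕ → ℤ) (a : ℤ),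
          (∀ x, 0 ≤ μ x) ∧ InPtilde m n μ ∧ l = μ + a • deltaWt m n} := by
  ext l
  simp only [Set.mem_setOf_eq]
  constructor
  · intro hl
    obtain ⟨h1, h2, h3, h4, h5⟩ := hl
    -- monotonicity chain on the barred block
    have barchain : ∀ c j, c + j < m → l (c + j) ≤ l c := by
      intro c j
      induction j with
      | zero => intro _; simp
      | succ j ih =>
        intro hj
        have := h2 (c + j) (by omega)
        have := ih (by omega)
        have hcc : c + (j + 1) = (c + j) + 1 := by omega
        rw [hcc]; linarith
    have hbar : ∀ x, x < m → l (m - 1) ≤ l x := by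
      intro x hx
      have : x + (m - 1 - x) = m - 1 := by omega
      calc l (m - 1) = l (x + (m - 1 - x)) := by rw [this]
        _ ≤ l x := barchain x _ (by omega)
    -- monotonicity chain on the unbarred block
    have unchain : ∀ k j, k + j < n → l (m + k + j) ≤ l (m + k) := by
      intro k j
      induction j with
      | zero => intro _; exact le_refl _
      | succ j ih =>
        intro hj
        have h4' := h4 (k + j + 1) (by omega) (by omega)
        have := ih (by omega)
        have e1 : m + (k + j + 1) = m + k + (j + 1) := by omega
        have e2 : m + (k + j + 1) - 1 = m + k + j := by omega
        rw [e1] at h4'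
        have e3 : m + k + (j + 1) - 1 = m + k + j := by omega
        rw [e3] at h4'
        linarith
    have hun : ∀ k, k < n → l (m + n - 1) ≤ l (m + k) := by
      intro k hk
      have e : m + k + (n - 1 - k) = m + n - 1 := by omega
      calc l (m + n - 1) = l (m + k + (n - 1 - k)) := by rw [e]
        _ ≤ l (m + k) := unchain k _ (by omega)
    -- key: 0 ≤ l (m-1) + l (m+k) for all k < n
    have key : ∀ k, k < n → 0 ≤ l (m - 1) + l (m + k) := by
      intro k
      induction k with
      | zero => intro _; simpa using h3
      | succ k ih =>
        intro hk
        have h4' := h4 (k + 1) (by omega) hk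
        have e2 : m + (k + 1) - 1 = m + k := by omega
        rw [e2] at h4'
        rcases lt_or_eq_of_le h4' with hlt | heq
        · have h5' := h5 (k + 1) (by omega) hk (by rw [e2]; exact hlt)
          have : (0 : ℤ) ≤ (k + 1 : ℕ) := by positivity
          linarith
        · have := ih (by omega)
          rw [heq]; linarith
    have hkey : 0 ≤ l (m - 1) + l (m + n - 1) := by
      have := key (n - 1) (by omega)
      have e : m + (n - 1) = m + n - 1 := by omega
      rwa [e] at this
    refine ⟨l + (l (m + n - 1)) • deltaWt m n, -(l (m + n - 1)), ?_, ?_, ?_⟩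
    · intro x
      show 0 ≤ l x + l (m + n - 1) * deltaWt m n x
      by_cases hx1 : x < m
      · rw [deltaWt_bar hx1]
        have := hbar x hx1
        linarith
      · by_cases hx2 : x < m + n
        · rw [deltaWt_unbar (by omega) hx2]
          have := hun (x - m) (by omega)
          have e : m + (x - m) = x := by omega
          rw [e] at this
          linarith
        · rw [deltaWt_zero (by omega), h1 x (by omega)]; simp
      -- done cases
    · exact inPtilde_add m n hm hn l _ ⟨h1, h2, h3, h4, h5⟩
    · funext x
      show l x = l x + l (m + n - 1) * deltaWt m n x + -(l (m + n - 1)) * deltaWt m n x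
      ring
  · rintro ⟨μ, a, hμ0, hμ, rfl⟩
    exact inPtilde_add m n hm hn μ a hμ
end

section
/- Let λ ∈ P̃⁺ and let Y_λ be the (m,n)-hook Young diagram with genuine highest weight λ (row lengths a_k for k = 1,...,m). Then the genuine lowest weight μ = glwt(Y_λ) satisfies λ − w₀μ = Σ_{(k,j): 1 ≤ k ≤ m, 1 ≤ j ≤ n, a_k ≥ j} (ε_{\overline{m+1-k}} − ε_j), where w₀ is the longest element of the Weyl group S_m × S_n acting by permuting the barred ε's among themselves and the unbarred ε's among themselves. -/
/-- Genuine highest weight of an `(m,n)`-hook Young diagram, in coordinates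
indexed by letter codes (`x < m` ↦ barred `\overline{m-x}`, `m + j` ↦ unbarred
`j+1`): `ghwt Y = Σ_k a_k ε_{\overline{m+1-k}} + Σ_j d_j ε_j`. -/
def ghwt (m n : ℕ) (Y : YoungDiagram) : ℕ → ℤ := fun x =>
  if x < m then (Y.rowLen x : ℤ)
  else if x < m + n then ((Y.colLen (x - m) - m : ℕ) : ℤ)
  else 0

/-- Genuine lowest weight of an `(m,n)`-hook Young diagram:
`glwt Y = b_m ε_{m̄} + ⋯ + b_1 ε_{1̄} + c_n ε₁ + ⋯ + c₁ ε_n`, where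
`b_k = max(a_k − n, 0)` and `c_j` is the `j`-th column length. -/
def glwt (m n : ℕ) (Y : YoungDiagram) : ℕ → ℤ := fun x =>
  if x < m then ((Y.rowLen (m - 1 - x) - n : ℕ) : ℤ)
  else if x < m + n then (Y.colLen (n - 1 - (x - m)) : ℤ)
  else 0

/-- Action of the longest element `w₀` of the Weyl group `S_m × S_n`:
it reverses the barred coordinates among themselves and the unbarred
coordinates among themselves. -/
def w0 (m n : ℕ) (l : ℕ → ℤ) : ℕ → ℤ := fun x =>
  if x < m then l (m - 1 - x)
  else if x < m + n then l (m + (n - 1 - (x - m)))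
  else l x

/-- For `λ ∈ P̃⁺` with diagram `Y = Y_λ` (row lengths `a_k`), the genuine
lowest weight `μ` satisfies
`λ − w₀μ = Σ_{(k,j) : a_k ≥ j} (ε_{\overline{m+1-k}} − ε_j)`. -/
theorem ghwt_sub_w0_glwt (m n : ℕ) (hm : 0 < m) (hn : 0 < n)
    (Y : YoungDiagram) (hY : Y.rowLen m ≤ n) :
    ghwt m n Y - w0 m n (glwt m n Y)
      = ∑ k ∈ Finset.range m, ∑ j ∈ Finset.range n,
          if j < Y.rowLen k then (Pi.single k (1 : ℤ) - Pi.single (m + j) 1)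
          else 0 := by

  funext x
  simp only [Pi.sub_apply, Finset.sum_apply]
  by_cases hx : x < m
  · -- barred coordinate
    have hw : w0 m n (glwt m n Y) x = ((Y.rowLen x - n : ℕ) : ℤ) := by
      simp only [w0, glwt, hx, if_pos, show m - 1 - x < m by omega,
        show m - 1 - (m - 1 - x) = x by omega, if_pos]
    have hg : ghwt m n Y x = (Y.rowLen x : ℤ) := by simp [ghwt, hx]
    rw [hw, hg]
    have hterm : ∀ k ∈ Finset.range m, ∀ j ∈ Finset.range n,
        (if j < Y.rowLen k then (Pi.single k (1:ℤ) - Pi.single (m+j) 1 : ℕ → ℤ) else 0) x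
          = if k = x ∧ j < Y.rowLen x then 1 else 0 := by
      intro k hk j hj
      simp only [Finset.mem_range] at hk hj
      by_cases hkx : k = x
      · subst hkx
        by_cases hjr : j < Y.rowLen k
        · simp [hjr, Pi.single_apply, show k ≠ m + j by omega]
        · simp [hjr]
      · by_cases hjr : j < Y.rowLen k
        · simp [hjr, Pi.single_apply, hkx, show x ≠ k from fun h => hkx h.symm,
            show x ≠ m + j by omega]
        · simp [hjr, hkx]
    rw [Finset.sum_congr rfl (fun k hk => Finset.sum_congr rfl (hterm k hk))]
    have : ∀ k ∈ Finset.range m, (∑ j ∈ Finset.range n,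
        if k = x ∧ j < Y.rowLen x then (1:ℤ) else 0)
          = if k = x then (min n (Y.rowLen x) : ℤ) else 0 := by
      intro k hk
      by_cases hkx : k = x
      · simp only [hkx, true_and, if_pos]
        have hfil : (Finset.range n).filter (fun j => j < Y.rowLen x)
            = Finset.range (min n (Y.rowLen x)) := by
          ext j; simp [Finset.mem_filter, Finset.mem_range]; try omega
        rw [Finset.sum_ite, Finset.sum_const_zero, add_zero, hfil, Finset.sum_const] <;>
        simp <;> omega
      · simp [hkx]
    rw [Finset.sum_congr rfl this, Finset.sum_ite_eq' (Finset.range m) x]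
    simp only [Finset.mem_range, hx, if_pos]
    have := Y.rowLen x
    push_cast
    omega
  · by_cases hx2 : x < m + n
    · -- unbarred coordinate
      have hw : w0 m n (glwt m n Y) x = (Y.colLen (x - m) : ℤ) := by
        unfold w0 glwt
        rw [if_neg hx, if_pos hx2, if_neg (show ¬ m + (n - 1 - (x - m)) < m by omega),
          if_pos (show m + (n - 1 - (x - m)) < m + n by omega),
          show m + (n - 1 - (x - m)) - m = n - 1 - (x - m) by omega,
          show n - 1 - (n - 1 - (x - m)) = x - m by omega]
      have hg : ghwt m n Y x = ((Y.colLen (x - m) - m : ℕ) : ℤ) := by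
        simp [ghwt, hx, hx2]
      rw [hw, hg]
      have hterm : ∀ k ∈ Finset.range m, ∀ j ∈ Finset.range n,
          (if j < Y.rowLen k then (Pi.single k (1:ℤ) - Pi.single (m+j) 1 : ℕ → ℤ) else 0) x
            = if j = x - m ∧ k < Y.colLen (x - m) then (-1 : ℤ) else 0 := by
        intro k hk j hj
        simp only [Finset.mem_range] at hk hj
        have hcr : ∀ a b : ℕ, (b < Y.rowLen a ↔ a < Y.colLen b) := by
          intro a b
          rw [← YoungDiagram.mem_iff_lt_rowLen, ← YoungDiagram.mem_iff_lt_colLen]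
        by_cases hjx : j = x - m
        · subst hjx
          by_cases hjr : x - m < Y.rowLen k
          · simp [hjr, Pi.single_apply, show m + (x - m) = x by omega,
              show x ≠ k by omega, (hcr k _).mp hjr]
          · have hkc : ¬ k < Y.colLen (x - m) := fun h => hjr ((hcr k (x - m)).mpr h)
            simp [hjr, hkc]
        · by_cases hjr : j < Y.rowLen k
          · simp [hjr, Pi.single_apply, show x ≠ k by omega, show x ≠ m + j by omega, hjx]
          · simp [hjr, hjx]
      rw [Finset.sum_congr rfl (fun k hk => Finset.sum_congr rfl (hterm k hk))]
      have hin : ∀ k ∈ Finset.range m, (∑ j ∈ Finset.range n,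
          if j = x - m ∧ k < Y.colLen (x - m) then (-1:ℤ) else 0)
            = if k < Y.colLen (x - m) then (-1:ℤ) else 0 := by
        intro k hk
        by_cases hkc : k < Y.colLen (x - m)
        · simp only [hkc, and_true]
          rw [Finset.sum_ite_eq' (Finset.range n) (x - m)]
          simp [show x - m < n by omega]
        · simp [hkc]
      rw [Finset.sum_congr rfl hin]
      have hfil : (Finset.range m).filter (fun k => k < Y.colLen (x - m))
          = Finset.range (min m (Y.colLen (x - m))) := by
        ext k; simp [Finset.mem_filter, Finset.mem_range]; try omega
      rw [Finset.sum_ite, Finset.sum_const_zero, add_zero, hfil, Finset.sum_const] <;>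
      simp only [Finset.card_range, nsmul_eq_mul, mul_neg, mul_one, Nat.cast_min] <;> omega
    · -- x ≥ m + n
      have : ∀ k ∈ Finset.range m, ∀ j ∈ Finset.range n,
          (if j < Y.rowLen k then (Pi.single k (1:ℤ) - Pi.single (m+j) 1 : ℕ → ℤ) else 0) x = 0 := by
        intro k hk j hj
        simp only [Finset.mem_range] at hk hj
        by_cases hjr : j < Y.rowLen k
        · simp [hjr, Pi.single_apply, show x ≠ k by omega, show x ≠ m + j by omega]
        · simp [hjr]
      rw [Finset.sum_congr rfl (fun k hk => Finset.sum_congr rfl (this k hk))]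
      simp [ghwt, w0, glwt, hx, hx2]
end

section
/- Let λ ∈ P̃⁺ and suppose Y_λ contains an m × n rectangle (full body). Then the genuine lowest weight of Y_λ equals w₀λ − Σ_{β ∈ Δ₁⁺} β, where Δ₁⁺ = {ε_{k̄} − ε_j : 1 ≤ k ≤ m, 1 ≤ j ≤ n} is the set of positive odd roots and w₀ reverses barred coordinates among themselves and unbarred coordinates among themselves. -/
lemma sum_single_apply (m n : ℕ) (x : ℕ) :
    ((∑ k ∈ Finset.range m, ∑ j ∈ Finset.range n,
        (Pi.single k (1 : ℤ) - Pi.single (m + j) 1) : ℕ → ℤ)) x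
      = (if x < m then (n : ℤ) else 0)
        - (if m ≤ x ∧ x < m + n then (m : ℤ) else 0) := by
  simp only [Finset.sum_apply, Pi.sub_apply, Pi.single_apply,
    Finset.sum_sub_distrib]
  congr 1
  · rw [Finset.sum_comm]
    simp only [Finset.sum_ite_eq, Finset.mem_range]
    split_ifs <;> simp
  · rw [Finset.sum_const]
    simp only [nsmul_eq_mul]
    by_cases h : m ≤ x ∧ x < m + n
    · have : ∑ j ∈ Finset.range n, (if x = m + j then (1:ℤ) else 0) = 1 := by
        have hx : x - m ∈ Finset.range n := by
          simp [Finset.mem_range]; omega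
        rw [Finset.sum_eq_single (x - m)]
        · simp; omega
        · intro b _ hb; simp; omega
        · intro hc; exact absurd hx hc
      rw [this]; simp [h]
    · have : ∑ j ∈ Finset.range n, (if x = m + j then (1:ℤ) else 0) = 0 := by
        apply Finset.sum_eq_zero; intro b hb
        simp only [Finset.mem_range] at hb
        simp; omega
      rw [this]; simp [h]

/-- If `Y_λ` has a full body (contains an `m × n` rectangle), then its genuine
lowest weight equals `w₀λ − Σ_{β ∈ Δ₁⁺} β`, summing over all positive odd
roots `ε_{k̄} − ε_j`. -/
theorem glwt_of_fullBody (m n : ℕ) (hm : 0 < m) (hn : 0 < n)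
    (Y : YoungDiagram) (hY : Y.rowLen m ≤ n)
    (hfull : ∀ k < m, n ≤ Y.rowLen k) :
    glwt m n Y
      = w0 m n (ghwt m n Y)
        - ∑ k ∈ Finset.range m, ∑ j ∈ Finset.range n,
            (Pi.single k (1 : ℤ) - Pi.single (m + j) 1) := by
  funext x
  rw [Pi.sub_apply, sum_single_apply]
  simp only [glwt, w0, ghwt]
  by_cases h1 : x < m
  · have hk : m - 1 - x < m := by omega
    have hge : n ≤ Y.rowLen (m - 1 - x) := hfull _ hk
    have h3 : ¬ (m ≤ x ∧ x < m + n) := by omega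
    rw [if_pos h1, if_pos h1, if_pos hk, if_pos h1, if_neg h3]
    push_cast [Nat.cast_sub hge]
    ring
  · by_cases h2 : x < m + n
    · have hj : n - 1 - (x - m) < n := by omega
      have hlt : ¬ (m + (n - 1 - (x - m)) < m) := by omega
      have hlt2 : m + (n - 1 - (x - m)) < m + n := by omega
      have hcol : m ≤ Y.colLen (n - 1 - (x - m)) := by
        have hmem : (m - 1, n - 1 - (x - m)) ∈ Y := by
          rw [Y.mem_iff_lt_rowLen]
          exact lt_of_lt_of_le hj (hfull _ (by omega))
        rw [Y.mem_iff_lt_colLen] at hmem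
        omega
      have h3 : (m ≤ x ∧ x < m + n) := ⟨by omega, h2⟩
      rw [if_neg h1, if_pos h2, if_neg h1, if_pos h2, if_neg hlt,
        if_pos hlt2, if_neg h1, if_pos h3]
      have he : m + (n - 1 - (x - m)) - m = n - 1 - (x - m) := by omega
      rw [he]
      push_cast [Nat.cast_sub hcol]
      ring
    · have h3 : ¬ (m ≤ x ∧ x < m + n) := by omega
      rw [if_neg h1, if_neg h2, if_neg h1, if_neg h2, if_neg h1, if_neg h2,
        if_neg h1, if_neg h3]
      ring
end

section
/- Let V(λ) be the irreducible highest weight U_q(gl(m,n))-module with highest weight λ, and assume V(λ) lies in the category O_int. Set λ_i = ⟨h_i, λ⟩. Then (i) λ₀ ≥ λ₁ + λ₂ + ... + λ_{n−1}, and (ii) if λ_k > 0 for some k ∈ {1,...,n−1}, then λ₀ − λ₁ − ... − λ_k ≥ k. The proof uses only the following two properties of the weight set Wt(M) of a module M in O_int: (a) (β, μ) ≥ 0 for every positive odd root β and every μ ∈ Wt(M); (b) if (β, μ) ≠ 0 and μ + β ∉ Wt(M) then μ − β ∈ Wt(M). -/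
/-!
Let `β_j = ε_{m-1} − ε_{m+j}` and `μ_t = λ − β_0 − ⋯ − β_{t-1}`. Since `λ − μ_t − β_j` has a
negative partial sum up to index `m + t` when `t ≤ j`, no `μ_t + β_j` lies in `W`; so by (b)
the chain `μ_0 = λ, μ_1, …` stays in `W` as long as `(β_t, μ_t) = lam (m-1) + lam (m+t) − t ≠ 0`.
If it reaches `μ_k`, property (a) gives `(β_k, μ_k) ≥ 0`, which is (ii). If it stops earlier, at
`μ_t` with `(β_t, μ_t) = 0`, then every `(β_j, μ_t)` with `t < j` vanishes as well (otherwise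
`μ_t − β_j ∈ W` pairs to `−1` with `β_t`), which forces `lam (m+k-1) = lam (m+k)`.
Part (i) is (a) for `λ` and `β_{n-1}`.
-/

/-- The symmetric bilinear form on the weight lattice of `gl(m,n)`, in
coordinates indexed by the letter codes `0, …, m+n-1`:
`(ε_a, ε_a) = 1` for barred `a` (codes `< m`), `−1` for unbarred `a`. -/
def pform (m n : ℕ) (l μ : ℕ → ℤ) : ℤ :=
  ∑ x ∈ Finset.range m, l x * μ x - ∑ x ∈ Finset.range n, l (m + x) * μ (m + x)

open Finset

lemma pform_single_sub_single {m n a b : ℕ} (ha : a < m) (hb : b < n) (μ : ℕ → ℤ) :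
    pform m n (Pi.single a 1 - Pi.single (m + b) 1) μ = μ a + μ (m + b) := by
  have h₁ : ∀ x ∈ range m, (Pi.single a 1 - Pi.single (m + b) 1 : ℕ → ℤ) x * μ x
      = if a = x then μ x else 0 := by
    intro x hx
    have : x ≠ m + b := by rw [mem_range] at hx; omega
    simp [Pi.single_apply, this, eq_comm]
  have h₂ : ∀ x ∈ range n, (Pi.single a 1 - Pi.single (m + b) 1 : ℕ → ℤ) (m + x) * μ (m + x)
      = if b = x then -μ (m + x) else 0 := by
    intro x _
    have : m + x ≠ a := by omega
    simp [Pi.single_apply, this, eq_comm, apply_ite Neg.neg]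
  rw [pform, sum_congr rfl h₁, sum_congr rfl h₂, sum_ite_eq, sum_ite_eq]
  simp [ha, hb]

lemma sum_range_nonneg_of_mem_closure {v : ℕ → ℤ} {P : ℕ → Prop}
    (hv : v ∈ AddSubmonoid.closure {x | ∃ c, P c ∧ x = Pi.single c 1 - Pi.single (c + 1) 1})
    (N : ℕ) : 0 ≤ ∑ i ∈ range N, v i := by
  induction hv using AddSubmonoid.closure_induction with
  | mem x hx =>
    obtain ⟨c, -, rfl⟩ := hx
    simp only [Pi.sub_apply, sum_sub_distrib, Pi.single_apply, sum_ite_eq', mem_range]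
    split_ifs <;> omega
  | zero => simp
  | add x y _ _ hx hy => simpa only [Pi.add_apply, sum_add_distrib] using add_nonneg hx hy

lemma sum_Icc_sub_succ (f : ℕ → ℤ) (m k : ℕ) :
    ∑ j ∈ Icc 1 k, (f (m + j - 1) - f (m + j)) = f m - f (m + k) := by
  induction k with
  | zero => simp
  | succ k ih =>
    rw [sum_Icc_succ_top (by omega), ih, show m + (k + 1) - 1 = m + k by omega]
    ring

def oddRoot (m j : ℕ) : ℕ → ℤ := Pi.single (m - 1) 1 - Pi.single (m + j) 1

def chainWeight (m : ℕ) (lam : ℕ → ℤ) (t : ℕ) : ℕ → ℤ := lam - ∑ i ∈ range t, oddRoot m i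

section

variable {m : ℕ} {lam : ℕ → ℤ}

lemma oddRoot_apply_sub_one (hm : 0 < m) (j : ℕ) : oddRoot m j (m - 1) = 1 := by
  rw [oddRoot, Pi.sub_apply, Pi.single_eq_same, Pi.single_eq_of_ne (by omega), sub_zero]

lemma oddRoot_apply_add (hm : 0 < m) (j i : ℕ) :
    oddRoot m j (m + i) = if i = j then -1 else 0 := by
  simp only [oddRoot, Pi.sub_apply, Pi.single_apply, add_right_inj]
  split_ifs <;> omega

lemma sum_range_oddRoot (hm : 0 < m) (t j : ℕ) :
    ∑ i ∈ range (m + t), oddRoot m j i = if j < t then 0 else 1 := by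
  simp only [oddRoot, Pi.sub_apply, sum_sub_distrib, Pi.single_apply, sum_ite_eq', mem_range,
    add_lt_add_iff_left]
  rw [if_pos (by omega)]
  split_ifs <;> rfl

lemma sum_range_chainWeight (hm : 0 < m) (t : ℕ) :
    ∑ i ∈ range (m + t), chainWeight m lam t i = ∑ i ∈ range (m + t), lam i := by
  simp only [chainWeight, Pi.sub_apply, Finset.sum_apply, sum_sub_distrib, sub_eq_self]
  rw [sum_comm]
  exact sum_eq_zero fun j hj => by rw [sum_range_oddRoot hm, if_pos (mem_range.1 hj)]

lemma chainWeight_succ (t : ℕ) :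
    chainWeight m lam (t + 1) = chainWeight m lam t - oddRoot m t := by
  rw [chainWeight, chainWeight, sum_range_succ, sub_add_eq_sub_sub]

lemma chainWeight_apply_sub_one (hm : 0 < m) (t : ℕ) :
    chainWeight m lam t (m - 1) = lam (m - 1) - t := by
  simp [chainWeight, oddRoot_apply_sub_one hm]

lemma chainWeight_apply_add (hm : 0 < m) (t i : ℕ) :
    chainWeight m lam t (m + i) = lam (m + i) + if i < t then 1 else 0 := by
  simp only [chainWeight, Pi.sub_apply, Finset.sum_apply, oddRoot_apply_add hm, sum_ite_eq,
    mem_range]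
  split_ifs <;> ring

variable {n : ℕ} {W : Set (ℕ → ℤ)}

lemma chainWeight_add_oddRoot_notMem (hm : 0 < m)
    (hdom : ∀ μ ∈ W, ∀ N, ∑ i ∈ range N, μ i ≤ ∑ i ∈ range N, lam i)
    {t j : ℕ} (htj : t ≤ j) : chainWeight m lam t + oddRoot m j ∉ W := fun h => by
  have := hdom _ h (m + t)
  rw [Pi.add_def, sum_add_distrib, sum_range_chainWeight hm, sum_range_oddRoot hm,
    if_neg (by omega)] at this
  omega

lemma chainWeight_mem (hm : 0 < m) (hlamW : lam ∈ W)
    (hdom : ∀ μ ∈ W, ∀ N, ∑ i ∈ range N, μ i ≤ ∑ i ∈ range N, lam i)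
    (him : ∀ μ ∈ W, ∀ b < n, μ (m - 1) + μ (m + b) ≠ 0 →
      μ + oddRoot m b ∉ W → μ - oddRoot m b ∈ W) :
    ∀ {t}, t ≤ n → (∀ s < t, lam (m - 1) + lam (m + s) ≠ s) → chainWeight m lam t ∈ W
  | 0, _, _ => by simpa [chainWeight] using hlamW
  | t + 1, htn, hne => by
    have hmem := chainWeight_mem hm hlamW hdom him (t := t) (by omega) fun s hs => hne s (by omega)
    have hpair : chainWeight m lam t (m - 1) + chainWeight m lam t (m + t) ≠ 0 := by
      rw [chainWeight_apply_sub_one hm, chainWeight_apply_add hm, if_neg (lt_irrefl t)]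
      have := hne t (by omega)
      omega
    rw [chainWeight_succ]
    exact him _ hmem t htn hpair (chainWeight_add_oddRoot_notMem hm hdom le_rfl)

lemma pairing_eq_of_chainWeight_mem (hm : 0 < m)
    (hdom : ∀ μ ∈ W, ∀ N, ∑ i ∈ range N, μ i ≤ ∑ i ∈ range N, lam i)
    (hpos : ∀ μ ∈ W, ∀ b < n, 0 ≤ μ (m - 1) + μ (m + b))
    (him : ∀ μ ∈ W, ∀ b < n, μ (m - 1) + μ (m + b) ≠ 0 →
      μ + oddRoot m b ∉ W → μ - oddRoot m b ∈ W)
    {t j : ℕ} (hmem : chainWeight m lam t ∈ W) (ht : lam (m - 1) + lam (m + t) = t)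
    (htj : t ≤ j) (hj : j < n) : lam (m - 1) + lam (m + j) = t := by
  rcases htj.eq_or_lt with rfl | htj
  · exact ht
  by_contra hne
  -- otherwise `μ_t − β_j ∈ W`, whose pairing with `β_t` is `−1`
  have hν := him _ hmem j hj
    (by rw [chainWeight_apply_sub_one hm, chainWeight_apply_add hm, if_neg (by omega)]; omega)
    (chainWeight_add_oddRoot_notMem hm hdom htj.le)
  have := hpos _ hν t (by omega)
  simp only [Pi.sub_apply, chainWeight_apply_sub_one hm, chainWeight_apply_add hm,
    oddRoot_apply_sub_one hm, oddRoot_apply_add hm, lt_irrefl, if_false, htj.ne] at this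
  omega

lemma le_pairing_of_lt (hm : 0 < m) (hlamW : lam ∈ W)
    (hdom : ∀ μ ∈ W, ∀ N, ∑ i ∈ range N, μ i ≤ ∑ i ∈ range N, lam i)
    (hpos : ∀ μ ∈ W, ∀ b < n, 0 ≤ μ (m - 1) + μ (m + b))
    (him : ∀ μ ∈ W, ∀ b < n, μ (m - 1) + μ (m + b) ≠ 0 →
      μ + oddRoot m b ∉ W → μ - oddRoot m b ∈ W)
    {k : ℕ} (hk : k < n) (hdesc : lam (m + k) < lam (m + k - 1)) :
    (k : ℤ) ≤ lam (m - 1) + lam (m + k) := by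
  classical
  by_cases h : ∃ s, s < k ∧ lam (m - 1) + lam (m + s) = s
  · obtain ⟨hsk, hs⟩ := Nat.find_spec h
    have hmem := chainWeight_mem hm hlamW hdom him (t := Nat.find h) (by omega)
      fun s hs heq => Nat.find_min h hs ⟨by omega, heq⟩
    have h₁ := pairing_eq_of_chainWeight_mem hm hdom hpos him hmem hs hsk.le hk
    have h₂ := pairing_eq_of_chainWeight_mem hm hdom hpos him hmem hs
      (Nat.le_sub_one_of_lt hsk) (by omega)
    rw [show m + (k - 1) = m + k - 1 by omega] at h₂
    omega
  · push Not at h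
    have := hpos _ (chainWeight_mem hm hlamW hdom him hk.le h) k hk
    rw [chainWeight_apply_sub_one hm, chainWeight_apply_add hm, if_neg (lt_irrefl k)] at this
    omega

end

/-- Proposition 3.5 of Benkart–Kang–Kashiwara, in its formal version.  Let `W`
(the weight set of `V(λ) ∈ O_int`) be a set of weights containing `λ`,
contained in `λ + Q₋` (the simple roots are the consecutive differences
`ε`-coordinates), such that `(β, μ) ≥ 0` for every positive odd root
`β = ε_ā − ε_b` and every `μ ∈ W`, and such that `(β, μ) ≠ 0` together with
`μ + β ∉ W` implies `μ − β ∈ W`.  With `λ₀ = ⟨h₀,λ⟩ = λ_{m-1} + λ_m` and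
`λ_k = ⟨h_k,λ⟩ = λ_{m+k-1} − λ_{m+k}`:
(i) `λ₀ ≥ λ₁ + ⋯ + λ_{n−1}`; and
(ii) if `λ_k > 0` for some `k ∈ {1,…,n−1}`, then
`λ₀ − λ₁ − ⋯ − λ_k ≥ k`. -/
theorem hw_inequalities (m n : ℕ) (hm : 0 < m) (hn : 0 < n)
    (lam : ℕ → ℤ) (W : Set (ℕ → ℤ)) (hlamW : lam ∈ W)
    (hQ : ∀ μ ∈ W, lam - μ ∈ AddSubmonoid.closure
        {x : ℕ → ℤ | ∃ c, c + 1 < m + n ∧ x = Pi.single c 1 - Pi.single (c + 1) 1})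
    (hpos : ∀ μ ∈ W, ∀ a < m, ∀ b < n,
      0 ≤ pform m n (Pi.single a 1 - Pi.single (m + b) 1) μ)
    (him : ∀ μ ∈ W, ∀ a < m, ∀ b < n,
      pform m n (Pi.single a 1 - Pi.single (m + b) 1) μ ≠ 0 →
      μ + (Pi.single a 1 - Pi.single (m + b) 1) ∉ W →
      μ - (Pi.single a 1 - Pi.single (m + b) 1) ∈ W) :
    (∑ k ∈ Finset.Icc 1 (n - 1), (lam (m + k - 1) - lam (m + k))
        ≤ lam (m - 1) + lam m) ∧
    (∀ k, 1 ≤ k → k ≤ n - 1 → 0 < lam (m + k - 1) - lam (m + k) →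
      (k : ℤ) ≤ (lam (m - 1) + lam m)
          - ∑ j ∈ Finset.Icc 1 k, (lam (m + j - 1) - lam (m + j))) := by
  have hm1 : m - 1 < m := by omega
  have hdom : ∀ μ ∈ W, ∀ N, ∑ i ∈ range N, μ i ≤ ∑ i ∈ range N, lam i := fun μ hμ N => by
    have := sum_range_nonneg_of_mem_closure (hQ μ hμ) N
    simp only [Pi.sub_apply, sum_sub_distrib] at this
    omega
  have hpos' : ∀ μ ∈ W, ∀ b < n, 0 ≤ μ (m - 1) + μ (m + b) := fun μ hμ b hb =>
    pform_single_sub_single hm1 hb μ ▸ hpos μ hμ (m - 1) hm1 b hb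
  have him' : ∀ μ ∈ W, ∀ b < n, μ (m - 1) + μ (m + b) ≠ 0 →
      μ + oddRoot m b ∉ W → μ - oddRoot m b ∈ W := fun μ hμ b hb hne =>
    him μ hμ (m - 1) hm1 b hb (by rwa [pform_single_sub_single hm1 hb])
  refine ⟨?_, fun k _ hkn hdesc => ?_⟩
  · have := hpos' lam hlamW (n - 1) (by omega)
    rw [sum_Icc_sub_succ]
    omega
  · have := le_pairing_of_lt hm hlamW hdom hpos' him' (k := k) (by omega) (by omega)
    rw [sum_Icc_sub_succ]
    omega
end

section
/- For letters a, b, c in the ordered alphabet B = {m̄ < ... < 1̄ < 1 < ... < n}: if the Γ-shaped tableau with a in position (1,1), b in position (1,2), c in position (2,1) is (m,n)-semistandard, then exactly one of the following holds: (i) the row (c, b) is row-semistandard, in which case the skew tableau with a at (1,2), c at (2,1), b at (2,2) is semistandard; or (ii) the column (b above c) is column-semistandard, in which case the skew tableau with b at (1,2), a at (2,1), c at (2,2) is semistandard. Moreover the resulting correspondence is a bijection between semistandard tableaux of the two shapes (the Knuth relation bijection). -/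
open Classical

/-- Row-semistandardness of a horizontal domino (letters coded `0,…,m+n-1`,
barred = codes `< m`): weak increase, equality only for barred letters. -/
def rowSS (m x y : ℕ) : Prop := x ≤ y ∧ (x = y → x < m)

/-- Column-semistandardness of a vertical domino: weak increase, equality only
for unbarred letters. -/
def colSS (m x y : ℕ) : Prop := x ≤ y ∧ (x = y → m ≤ x)

/-!
Every relation between the letters reduces to two mixed-transitivity facts: a row pair
followed by a column pair (or vice versa) is strictly increasing, since an equality
`u = v = w` would make a letter both barred and unbarred. Comparing `b` and `c` therefore
decides which of the two skew tableaux the Γ-tableau goes to, and the map is inverted by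
comparing the entries `(1,2)` and `(2,1)` of the skew tableau by column-semistandardness.
-/

section Dominoes

variable {m u v w : ℕ}

theorem rowSS_of_lt (h : u < v) : rowSS m u v := ⟨h.le, fun huv => absurd huv h.ne⟩

theorem colSS_of_lt (h : u < v) : colSS m u v := ⟨h.le, fun huv => absurd huv h.ne⟩

theorem lt_of_rowSS_of_colSS (huv : rowSS m u v) (hvw : colSS m v w) : u < w := by
  unfold rowSS colSS at *
  omega

theorem lt_of_colSS_of_rowSS (huv : colSS m u v) (hvw : rowSS m v w) : u < w := by
  unfold rowSS colSS at *
  omega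

theorem not_colSS_of_rowSS (h : rowSS m u v) : ¬ colSS m v u :=
  fun h' => (lt_of_rowSS_of_colSS h h').false

theorem not_rowSS_iff_colSS : ¬ rowSS m v u ↔ colSS m u v := by
  unfold rowSS colSS
  omega

theorem rowSS_of_not_colSS (h : ¬ colSS m u v) : rowSS m v u :=
  not_not.1 (mt not_rowSS_iff_colSS.1 h)

end Dominoes

def gammaTableaux (m n : ℕ) : Set (ℕ × ℕ × ℕ) :=
  {t | t.1 < m + n ∧ t.2.1 < m + n ∧ t.2.2 < m + n ∧ rowSS m t.1 t.2.1 ∧ colSS m t.1 t.2.2}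

def skewTableaux (m n : ℕ) : Set (ℕ × ℕ × ℕ) :=
  {t | t.1 < m + n ∧ t.2.1 < m + n ∧ t.2.2 < m + n ∧ colSS m t.1 t.2.2 ∧ rowSS m t.2.1 t.2.2}

noncomputable def knuthMap (m : ℕ) (t : ℕ × ℕ × ℕ) : ℕ × ℕ × ℕ :=
  if rowSS m t.2.2 t.2.1 then (t.1, t.2.2, t.2.1) else (t.2.1, t.1, t.2.2)

noncomputable def knuthMapInv (m : ℕ) (t : ℕ × ℕ × ℕ) : ℕ × ℕ × ℕ :=
  if colSS m t.1 t.2.1 then (t.1, t.2.2, t.2.1) else (t.2.1, t.1, t.2.2)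

section KnuthMap

variable {m n : ℕ}

theorem knuthMap_mapsTo : Set.MapsTo (knuthMap m) (gammaTableaux m n) (skewTableaux m n) := by
  rintro ⟨a, b, c⟩ ⟨ha, hb, hc, hab, hac⟩
  by_cases hcb : rowSS m c b
  · rw [knuthMap, if_pos hcb]
    exact ⟨ha, hc, hb, colSS_of_lt (lt_of_colSS_of_rowSS hac hcb), hcb⟩
  · have hbc := not_rowSS_iff_colSS.1 hcb
    rw [knuthMap, if_neg hcb]
    exact ⟨hb, ha, hc, hbc, rowSS_of_lt (lt_of_rowSS_of_colSS hab hbc)⟩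

theorem knuthMapInv_mapsTo :
    Set.MapsTo (knuthMapInv m) (skewTableaux m n) (gammaTableaux m n) := by
  rintro ⟨x, y, z⟩ ⟨hx, hy, hz, hxz, hyz⟩
  by_cases hxy : colSS m x y
  · rw [knuthMapInv, if_pos hxy]
    exact ⟨hx, hz, hy, rowSS_of_lt (lt_of_colSS_of_rowSS hxy hyz), hxy⟩
  · have hyx := rowSS_of_not_colSS hxy
    rw [knuthMapInv, if_neg hxy]
    exact ⟨hy, hx, hz, hyx, colSS_of_lt (lt_of_rowSS_of_colSS hyx hxz)⟩

theorem knuthMap_invOn :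
    Set.InvOn (knuthMapInv m) (knuthMap m) (gammaTableaux m n) (skewTableaux m n) := by
  constructor
  · rintro ⟨a, b, c⟩ ⟨-, -, -, hab, hac⟩
    by_cases hcb : rowSS m c b
    · simp only [knuthMap, knuthMapInv, if_pos hcb, if_pos hac]
    · simp only [knuthMap, knuthMapInv, if_neg hcb, if_neg (not_colSS_of_rowSS hab)]
  · rintro ⟨x, y, z⟩ ⟨-, -, -, hxz, hyz⟩
    by_cases hxy : colSS m x y
    · simp only [knuthMap, knuthMapInv, if_pos hxy, if_pos hyz]
    · have hzx : ¬ rowSS m z x := fun h => not_colSS_of_rowSS h hxz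
      simp only [knuthMap, knuthMapInv, if_neg hxy, if_neg hzx]

end KnuthMap

/-- The Knuth relation (Lemma 4.8 of Benkart–Kang–Kashiwara).  A semistandard
`Γ`-tableau is a triple `(a,b,c)` with `a` at `(1,1)`, `b` at `(1,2)`, `c` at
`(2,1)`, i.e. `rowSS a b` and `colSS a c`.  A semistandard tableau of the
mirrored skew shape is a triple `(x,y,z)` with `x` at `(1,2)`, `y` at `(2,1)`,
`z` at `(2,2)`, i.e. `colSS x z` and `rowSS y z`.  For a semistandard
`Γ`-tableau, exactly one of `rowSS c b`, `colSS b c` holds; in the first case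
`(a, c, b)` is a semistandard skew tableau, in the second `(b, a, c)` is; and
the resulting map `ψ` is a bijection between the two sets of semistandard
tableaux. -/
theorem knuth_relation (m n : ℕ) :
    (∀ a b c : ℕ, a < m + n → b < m + n → c < m + n →
      rowSS m a b → colSS m a c →
      Xor' (rowSS m c b) (colSS m b c) ∧
      (rowSS m c b → colSS m a b ∧ rowSS m c b) ∧
      (colSS m b c → colSS m b c ∧ rowSS m a c)) ∧
    Set.BijOn
      (fun t : ℕ × ℕ × ℕ =>
        if rowSS m t.2.2 t.2.1 then (t.1, t.2.2, t.2.1) else (t.2.1, t.1, t.2.2))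
      {t : ℕ × ℕ × ℕ | t.1 < m + n ∧ t.2.1 < m + n ∧ t.2.2 < m + n ∧
        rowSS m t.1 t.2.1 ∧ colSS m t.1 t.2.2}
      {t : ℕ × ℕ × ℕ | t.1 < m + n ∧ t.2.1 < m + n ∧ t.2.2 < m + n ∧
        colSS m t.1 t.2.2 ∧ rowSS m t.2.1 t.2.2} := by
  refine ⟨fun a b c _ _ _ hab hac => ⟨?_, ?_, ?_⟩, ?_⟩
  · exact xor_iff_not_iff'.2 not_rowSS_iff_colSS
  · exact fun hcb => ⟨colSS_of_lt (lt_of_colSS_of_rowSS hac hcb), hcb⟩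
  · exact fun hbc => ⟨hbc, rowSS_of_lt (lt_of_rowSS_of_colSS hab hbc)⟩
  · exact knuthMap_invOn.bijOn knuthMap_mapsTo knuthMapInv_mapsTo
end

section
/- Column insertion into a single column: let (a₁, ..., a_r) be a column-semistandard word over B and b ∈ B. If appending b at the bottom keeps the column semistandard, the insertion outputs the letter a₁ and the column (a₂, ..., a_r, b). Otherwise, letting ν be the smallest index such that the row pair (b, a_ν) is row-semistandard, the insertion outputs the letter a_ν and the column (a₁, ..., a_{ν−1}, b, a_{ν+1}, ..., a_r); this replaced column is again column-semistandard. In particular, the resulting map from {column-semistandard words of length r} × B to B × {column-semistandard words of length r} is a bijection (with inverse given by the reverse bumping procedure). -/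
instance (m x y : ℕ) : Decidable (rowSS m x y) := by unfold rowSS; infer_instance
instance (m x y : ℕ) : Decidable (colSS m x y) := by unfold colSS; infer_instance
instance (m : ℕ) : DecidableRel (colSS m) := fun _ _ => inferInstance

/-- Column insertion of a letter `b` into a column word `l = (a₁, …, a_r)`:
if appending `b` at the bottom keeps the column semistandard, the output is
the letter `a₁` together with the column `(a₂, …, a_r, b)`; otherwise, letting
`ν` be the smallest index such that `(b, a_ν)` is row-semistandard, the output
is the letter `a_ν` together with `l` with `a_ν` replaced by `b`. -/
def colInsert (m : ℕ) (l : List ℕ) (b : ℕ) : ℕ × List ℕ :=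
  if (l ++ [b]).IsChain (colSS m) then ((l ++ [b]).headI, (l ++ [b]).tail)
  else
    (l.getD (l.findIdx fun a => decide (rowSS m b a)) 0,
     l.set (l.findIdx fun a => decide (rowSS m b a)) b)

/-! Since `¬ rowSS m x y ↔ colSS m y x` and `colSS m` is transitive, a column is pairwise
`colSS`-ordered. If `b` cannot be appended below the column, its last letter `a'` has `(b, a')`
row-semistandard, so there is a first such letter `a`. Every letter above `a` may stand above `b`,
and every letter below `a` may stand below `b` because it may stand below `a`; so `b` replaces `a`.
In the new column `a` may stand above every letter below `b` but not above `b` itself, hence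
reverse bumping, which scans bottom-up for the first letter `x` with `(x, a)` row-semistandard,
stops at `b` and restores the column. Insertion and reverse bumping therefore compute the same
relation `ColInsertRel`, which is thus the graph of a bijection; it permutes the letters, so
bounds and lengths are preserved. -/

namespace List

variable {α : Type*}

theorem findIdx_append_cons {p : α → Bool} {xs ys : List α} {a : α}
    (hxs : ∀ x ∈ xs, ¬ p x) (ha : p a) : (xs ++ a :: ys).findIdx p = xs.length := by
  simp_all [findIdx_append, findIdx_cons]

theorem exists_eq_append_cons_of_exists {p : α → Bool} {l : List α} (h : ∃ x ∈ l, p x) :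
    ∃ xs a ys, l = xs ++ a :: ys ∧ (∀ x ∈ xs, ¬ p x) ∧ p a := by
  obtain ⟨a, ha⟩ := Option.isSome_iff_exists.1 (find?_isSome.2 h)
  obtain ⟨hpa, xs, ys, rfl, hxs⟩ := find?_eq_some_iff_append.1 ha
  exact ⟨xs, a, ys, rfl, by simpa using hxs, hpa⟩

theorem Perm.forall_cons {p : α → Prop} {a b : α} {l L : List α} (h : (a :: L).Perm (b :: l))
    (hb : p b) (hl : ∀ x ∈ l, p x) : p a ∧ ∀ x ∈ L, p x :=
  forall_mem_cons.1 fun x hx => (forall_mem_cons (p := p)).2 ⟨hb, hl⟩ x (h.subset hx)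

variable {R : α → α → Prop} {xs ys : List α} {a b x : α}

theorem Pairwise.rel_of_mem_left (h : (xs ++ a :: ys).Pairwise R) (hx : x ∈ xs) : R x a :=
  (pairwise_append.1 h).2.2 x hx a mem_cons_self

theorem Pairwise.rel_of_mem_right (h : (xs ++ a :: ys).Pairwise R) (hx : x ∈ ys) : R a x :=
  rel_of_pairwise_cons (pairwise_append.1 h).2.1 hx

theorem Pairwise.replace (h : (xs ++ a :: ys).Pairwise R) (hxs : ∀ x ∈ xs, R x b)
    (hys : ∀ y ∈ ys, R b y) : (xs ++ b :: ys).Pairwise R := by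
  simp_all [pairwise_append, pairwise_cons]

end List

section

variable {m x y z : ℕ}

theorem not_rowSS_iff : ¬ rowSS m x y ↔ colSS m y x := by
  unfold rowSS colSS; omega

theorem not_colSS_iff : ¬ colSS m x y ↔ rowSS m y x := by
  rw [← not_rowSS_iff, not_not]

theorem colSS_trans (h₁ : colSS m x y) (h₂ : colSS m y z) : colSS m x z := by
  unfold colSS at *; omega

instance (m : ℕ) : Trans (colSS m) (colSS m) (colSS m) := ⟨colSS_trans⟩

theorem colSS_of_rowSS_of_colSS (h₁ : rowSS m x y) (h₂ : colSS m y z) : colSS m x z := by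
  unfold rowSS colSS at *; omega

theorem colSS_of_colSS_of_rowSS (h₁ : colSS m x y) (h₂ : rowSS m y z) : colSS m x z := by
  unfold rowSS colSS at *; omega

end

/-- Reverse bumping of the letter `c` into the column `L`, the list being reversed so that
the scan runs bottom-up. -/
def colExtract (m c : ℕ) (L : List ℕ) : List ℕ × ℕ :=
  if (c :: L).IsChain (colSS m) then ((c :: L).dropLast, (c :: L).getLast (List.cons_ne_nil c L))
  else
    ((L.reverse.set (L.reverse.findIdx fun a => decide (rowSS m a c)) c).reverse,
     L.reverse.getD (L.reverse.findIdx fun a => decide (rowSS m a c)) 0)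

structure IsBump (m : ℕ) (xs : List ℕ) (a : ℕ) (ys : List ℕ) (b : ℕ) : Prop where
  pairwise : (xs ++ a :: ys).Pairwise (colSS m)
  not_rowSS_of_mem : ∀ x ∈ xs, ¬ rowSS m b x
  rowSS_bumped : rowSS m b a

namespace IsBump

variable {m a b : ℕ} {xs ys : List ℕ}

theorem pairwise_bumped (h : IsBump m xs a ys b) : (xs ++ b :: ys).Pairwise (colSS m) :=
  h.pairwise.replace (fun x hx => not_rowSS_iff.1 (h.not_rowSS_of_mem x hx))
    fun _ hy => colSS_of_rowSS_of_colSS h.rowSS_bumped (h.pairwise.rel_of_mem_right hy)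

theorem not_colSS (h : IsBump m xs a ys b) : ¬ colSS m a b :=
  fun hab => not_rowSS_iff.2 hab h.rowSS_bumped

theorem colInsert_eq (h : IsBump m xs a ys b) :
    colInsert m (xs ++ a :: ys) b = (a, xs ++ b :: ys) := by
  have hnc : ¬ (xs ++ a :: ys ++ [b]).IsChain (colSS m) := fun hc =>
    h.not_colSS <| (List.isChain_iff_pairwise.1 hc).rel_of_mem_left (by simp)
  rw [colInsert, if_neg hnc, List.findIdx_append_cons (by simpa using h.not_rowSS_of_mem)
    (by simpa using h.rowSS_bumped)]
  simp

theorem colExtract_eq (h : IsBump m xs a ys b) :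
    colExtract m a (xs ++ b :: ys) = (xs ++ a :: ys, b) := by
  have hnc : ¬ (a :: (xs ++ b :: ys)).IsChain (colSS m) := fun hc =>
    h.not_colSS <| List.rel_of_pairwise_cons (List.isChain_iff_pairwise.1 hc) (by simp)
  have hys : ∀ y ∈ ys.reverse, ¬ rowSS m y a := fun y hy =>
    not_rowSS_iff.2 (h.pairwise.rel_of_mem_right (List.mem_reverse.1 hy))
  have hrev : (xs ++ b :: ys).reverse = ys.reverse ++ b :: xs.reverse := by simp
  rw [colExtract, if_neg hnc, hrev, List.findIdx_append_cons (by simpa using hys)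
    (by simpa using h.rowSS_bumped)]
  simp

end IsBump

section

variable {m b c : ℕ} {l L : List ℕ}

theorem exists_isBump_of_not_isChain_append (hl : l.IsChain (colSS m))
    (h : ¬ (l ++ [b]).IsChain (colSS m)) : ∃ xs a ys, l = xs ++ a :: ys ∧ IsBump m xs a ys b := by
  have hex : ∃ x ∈ l, rowSS m b x := by
    simp only [List.isChain_append, hl, List.isChain_singleton, List.head?_cons,
      Option.mem_def, Option.some.injEq, forall_eq', true_and, not_forall] at h
    obtain ⟨x, hx, hxb⟩ := h
    exact ⟨x, List.mem_of_getLast? hx, not_colSS_iff.1 hxb⟩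
  obtain ⟨xs, a, ys, rfl, hxs, ha⟩ :=
    List.exists_eq_append_cons_of_exists (p := fun x => decide (rowSS m b x)) (by simpa using hex)
  exact ⟨xs, a, ys, rfl, List.isChain_iff_pairwise.1 hl, by simpa using hxs, by simpa using ha⟩

theorem exists_isBump_of_not_isChain_cons (hL : L.IsChain (colSS m))
    (h : ¬ (c :: L).IsChain (colSS m)) : ∃ xs a ys, L = xs ++ a :: ys ∧ IsBump m xs c ys a := by
  have hex : ∃ x ∈ L, rowSS m x c := by
    cases L with
    | nil => exact absurd (List.isChain_singleton c) h
    | cons x L =>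
      rw [List.isChain_cons_cons, not_and'] at h
      exact ⟨x, List.mem_cons_self, not_colSS_iff.1 (h hL)⟩
  obtain ⟨ys, a, xs, hrev, hys, ha⟩ :=
    List.exists_eq_append_cons_of_exists (l := L.reverse) (p := fun x => decide (rowSS m x c))
      (by simpa using hex)
  obtain rfl : L = xs.reverse ++ a :: ys.reverse := by simpa using congrArg List.reverse hrev
  simp only [decide_eq_true_eq] at hys ha
  have hpw := List.isChain_iff_pairwise.1 hL
  refine ⟨xs.reverse, a, ys.reverse, rfl, hpw.replace (fun x hx => ?_) (fun y hy => ?_),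
    fun x hx => not_rowSS_iff.2 (hpw.rel_of_mem_left hx), ha⟩
  · exact colSS_of_colSS_of_rowSS (hpw.rel_of_mem_left hx) ha
  · exact not_rowSS_iff.1 (hys y (List.mem_reverse.1 hy))

theorem colInsert_of_not_isChain_append (hl : l.IsChain (colSS m))
    (h : ¬ (l ++ [b]).IsChain (colSS m)) :
    ∃ ν, ν < l.length ∧ rowSS m b (l.getD ν 0) ∧ (∀ ν' < ν, ¬ rowSS m b (l.getD ν' 0)) ∧
      colInsert m l b = (l.getD ν 0, l.set ν b) ∧ (l.set ν b).IsChain (colSS m) := by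
  obtain ⟨xs, a, ys, rfl, hab⟩ := exists_isBump_of_not_isChain_append hl h
  refine ⟨xs.length, by simp, by simpa using hab.rowSS_bumped, fun ν hν => ?_, ?_, ?_⟩
  · rw [List.getD_append _ _ _ _ hν, List.getD_eq_getElem _ _ hν]
    exact hab.not_rowSS_of_mem _ (List.getElem_mem hν)
  · simpa using hab.colInsert_eq
  · simpa using List.isChain_iff_pairwise.2 hab.pairwise_bumped

end

inductive ColInsertRel (m : ℕ) : List ℕ → ℕ → ℕ → List ℕ → Prop
  | append {l b c L} : (l ++ [b]).IsChain (colSS m) → c :: L = l ++ [b] → ColInsertRel m l b c L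
  | bump {xs a ys b} : IsBump m xs a ys b → ColInsertRel m (xs ++ a :: ys) b a (xs ++ b :: ys)

namespace ColInsertRel

variable {m b c : ℕ} {l L : List ℕ}

theorem colInsert_eq (h : ColInsertRel m l b c L) : colInsert m l b = (c, L) := by
  cases h with
  | append hc hw => rw [colInsert, if_pos hc, ← hw]; rfl
  | bump h => exact h.colInsert_eq

theorem colExtract_eq (h : ColInsertRel m l b c L) : colExtract m c L = (l, b) := by
  cases h with
  | append hc hw => simp [colExtract, hw, hc]
  | bump h => exact h.colExtract_eq

theorem perm (h : ColInsertRel m l b c L) : (c :: L).Perm (b :: l) := by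
  cases h with
  | append _ hw => exact hw ▸ List.perm_append_singleton b l
  | bump _ => exact (List.perm_middle.cons _).trans ((List.Perm.swap _ _ _).trans
      (List.perm_middle.cons _).symm)

theorem isChain_left (h : ColInsertRel m l b c L) : l.IsChain (colSS m) := by
  cases h with
  | append hc _ => exact hc.left_of_append
  | bump h => exact List.isChain_iff_pairwise.2 h.pairwise

theorem isChain_right (h : ColInsertRel m l b c L) : L.IsChain (colSS m) := by
  cases h with
  | append hc hw => exact (hw ▸ hc).tail
  | bump h => exact List.isChain_iff_pairwise.2 h.pairwise_bumped

end ColInsertRel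

section

variable {m b c : ℕ} {l L : List ℕ}

theorem colInsertRel_colInsert (hl : l.IsChain (colSS m)) :
    ColInsertRel m l b (colInsert m l b).1 (colInsert m l b).2 := by
  suffices ∃ c L, ColInsertRel m l b c L by
    obtain ⟨c, L, h⟩ := this
    rwa [h.colInsert_eq]
  by_cases hc : (l ++ [b]).IsChain (colSS m)
  · obtain ⟨c, L, hw⟩ := List.exists_cons_of_ne_nil (List.concat_ne_nil b l)
    exact ⟨c, L, .append hc hw.symm⟩
  · obtain ⟨xs, a, ys, rfl, h⟩ := exists_isBump_of_not_isChain_append hl hc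
    exact ⟨_, _, .bump h⟩

theorem colInsertRel_colExtract (hL : L.IsChain (colSS m)) :
    ColInsertRel m (colExtract m c L).1 (colExtract m c L).2 c L := by
  suffices ∃ l b, ColInsertRel m l b c L by
    obtain ⟨l, b, h⟩ := this
    rwa [h.colExtract_eq]
  by_cases hc : (c :: L).IsChain (colSS m)
  · have hw := (List.dropLast_append_getLast (List.cons_ne_nil c L)).symm
    exact ⟨_, _, .append (hw ▸ hc) hw⟩
  · obtain ⟨xs, a, ys, rfl, h⟩ := exists_isBump_of_not_isChain_cons hL hc
    exact ⟨_, _, .bump h⟩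

end

/-- Column insertion (Benkart–Kang–Kashiwara, bumping into a single column).
If appending fails, a smallest row-semistandard bumping index `ν` exists, the
replaced column is again column-semistandard, and the insertion map is a
bijection from (column-semistandard words of length `r`) × `B` onto
`B` × (column-semistandard words of length `r`). -/
theorem colInsert_spec (m n r : ℕ) :
    (∀ (l : List ℕ) (b : ℕ), l.Chain' (colSS m) → (∀ x ∈ l, x < m + n) →
      b < m + n → ¬ (l ++ [b]).Chain' (colSS m) →
      ∃ ν, ν < l.length ∧ rowSS m b (l.getD ν 0) ∧
        (∀ ν' < ν, ¬ rowSS m b (l.getD ν' 0)) ∧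
        colInsert m l b = (l.getD ν 0, l.set ν b) ∧
        (l.set ν b).Chain' (colSS m)) ∧
    Set.BijOn (fun p : List ℕ × ℕ => colInsert m p.1 p.2)
      {p : List ℕ × ℕ | p.1.Chain' (colSS m) ∧ (∀ x ∈ p.1, x < m + n) ∧
        p.1.length = r ∧ p.2 < m + n}
      {p : ℕ × List ℕ | p.1 < m + n ∧ p.2.Chain' (colSS m) ∧
        (∀ x ∈ p.2, x < m + n) ∧ p.2.length = r} := by
  refine ⟨fun l b hl _ _ hc => colInsert_of_not_isChain_append hl hc, ?_⟩
  refine Set.InvOn.bijOn (f' := fun q => colExtract m q.1 q.2)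
    ⟨fun p hp => (colInsertRel_colInsert hp.1).colExtract_eq,
      fun q hq => (colInsertRel_colExtract hq.2.1).colInsert_eq⟩ ?_ ?_
  · rintro ⟨l, b⟩ ⟨hl, hlN, rfl, hb⟩
    have h := colInsertRel_colInsert (b := b) hl
    obtain ⟨hcN, hLN⟩ := h.perm.forall_cons (p := (· < m + n)) hb hlN
    exact ⟨hcN, h.isChain_right, hLN, by simpa using h.perm.length_eq⟩
  · rintro ⟨c, L⟩ ⟨hc, hL, hLN, rfl⟩
    have h := colInsertRel_colExtract (c := c) hL
    obtain ⟨hbN, hlN⟩ := h.perm.symm.forall_cons (p := (· < m + n)) hc hLN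
    exact ⟨h.isChain_left, hlN, by simpa using h.perm.length_eq.symm, hbN⟩
end

section
/- Let Y₀ be an (m,n)-hook Young diagram. The map sending T ⊗ c (T an (m,n)-semistandard tableau of shape Y₀, c ∈ B) to the output of the column bumping procedure is a bijection from B(Y₀) × B onto the disjoint union ⊔_{Y ∈ 𝒴} B(Y), where 𝒴 is the set of (m,n)-hook Young diagrams obtained from Y₀ by adding one box at a co-corner. -/
/-- The `j`-th column of a column-wise presented tableau. -/
def colAt (cols : List (ℕ × List ℕ)) (j : ℕ) : ℕ × List ℕ := cols.getD j (0, [])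

/-- `(m,n)`-semistandardness of a column-wise presented (skew) tableau. -/
def IsSkewSSYT (m n : ℕ) (cols : List (ℕ × List ℕ)) : Prop :=
  (∀ c ∈ cols, c.2 ≠ []) ∧
  (∀ c ∈ cols, c.2.Chain' (colSS m)) ∧
  (∀ c ∈ cols, ∀ x ∈ c.2, x < m + n) ∧
  (∀ j, j + 1 < cols.length →
    (colAt cols (j+1)).1 ≤ (colAt cols j).1 ∧
    (colAt cols (j+1)).1 + (colAt cols (j+1)).2.length
        ≤ (colAt cols j).1 + (colAt cols j).2.length ∧
    ∀ i, (colAt cols j).1 ≤ i →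
      i < (colAt cols (j+1)).1 + (colAt cols (j+1)).2.length →
      rowSS m ((colAt cols j).2.getD (i - (colAt cols j).1) 0)
        ((colAt cols (j+1)).2.getD (i - (colAt cols (j+1)).1) 0))

/-- The column bumping procedure. -/
def skewBump (m : ℕ) : ℕ → List (ℕ × List ℕ) → List (ℕ × List ℕ)
  | b, [] => [(0, [b])]
  | b, (o, l) :: rest =>
    if (l ++ [b]).IsChain (colSS m) then (o, l ++ [b]) :: rest
    else
      (o, l.set (l.findIdx fun a => decide (rowSS m b a)) b) ::
        skewBump m (l.getD (l.findIdx fun a => decide (rowSS m b a)) 0) rest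

/-!
Inserting `x` into the first column `c` either appends it (if `c ++ [x]` is still column-strict)
or puts `x` in place of the topmost entry `a` of `c` that may stand right of `x` in a row, and
`a` is then inserted into the remaining columns. Throughout, the letter being inserted was
displaced from some row `r` of the column `L` to its left, `r` is the lowest row of `L` whose
entry may stand left of that letter, and the letter enters the next column at a row `≤ r`. This
invariant keeps the rows semistandard, so the result is a tableau whose shape has one more box.

The step can be undone: in the modified column, the row the displaced letter came from is again
the lowest row whose entry may stand left of it. This gives injectivity, and running the reverse
step from any admissible added box gives surjectivity. The new shape is automatically an
`(m,n)`-hook shape, since along row `m` the entries of a tableau grow by at least one per column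
starting from `m`, so column `n` would need a letter `≥ m + n`.
-/

namespace List

variable {α : Type*} {l : List α} {i j : ℕ} {d : α}

theorem getD_set_self (h : i < l.length) (x : α) : (l.set i x).getD i d = x := by
  simp [getD_eq_getElem?_getD, h]

theorem getD_set_of_ne (h : i ≠ j) (x : α) : (l.set i x).getD j d = l.getD j d := by
  simp [getD_eq_getElem?_getD, h]

theorem set_getD_self (h : i < l.length) : l.set i (l.getD i d) = l := by
  rw [getD_eq_getElem _ _ h, set_getElem_self]

theorem getD_mem (h : i < l.length) : l.getD i d ∈ l := by
  rw [getD_eq_getElem _ _ h]; exact getElem_mem h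

theorem isChain_iff_getD {R : α → α → Prop} :
    l.IsChain R ↔ ∀ i, i + 1 < l.length → R (l.getD i d) (l.getD (i + 1) d) := by
  rw [isChain_iff_getElem]
  refine forall_congr' fun i => forall_congr' fun hi => ?_
  rw [getD_eq_getElem _ _ hi, getD_eq_getElem _ _ (Nat.lt_of_succ_lt hi)]

theorem isChain_set {R : α → α → Prop} (hl : l.IsChain R) {x : α}
    (hprev : ∀ i, i + 1 = j → R (l.getD i d) x)
    (hnext : j + 1 < l.length → R x (l.getD (j + 1) d)) : (l.set j x).IsChain R := by
  rw [isChain_iff_getD (d := d)] at hl ⊢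
  intro i hi
  rw [length_set] at hi
  rcases lt_trichotomy (i + 1) j with h | h | h
  · rw [getD_set_of_ne (by omega), getD_set_of_ne (by omega)]; exact hl i hi
  · rw [getD_set_of_ne (by omega), ← h, getD_set_self hi]; exact hprev i h
  · rcases eq_or_ne i j with rfl | h'
    · rw [getD_set_self (by omega), getD_set_of_ne (by omega)]; exact hnext hi
    · rw [getD_set_of_ne (by omega), getD_set_of_ne (by omega)]; exact hl i hi

end List

namespace YoungDiagram

variable {μ ν : YoungDiagram}

theorem colLen_eq_of_forall_mem_iff {j c : ℕ} (h : ∀ i, (i, j) ∈ μ ↔ i < c) :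
    μ.colLen j = c := by
  have h' (i : ℕ) : i < μ.colLen j ↔ i < c := mem_iff_lt_colLen.symm.trans (h i)
  have := h' (μ.colLen j)
  have := h' c
  omega

theorem rowLen_le_iff_colLen_le {i j : ℕ} : μ.rowLen i ≤ j ↔ μ.colLen j ≤ i := by
  rw [← not_lt, ← not_lt, ← mem_iff_lt_rowLen, ← mem_iff_lt_colLen]

theorem exists_colLen_eq {f : ℕ → ℕ} (hf : Antitone f) {N : ℕ} (hN : f N = 0) :
    ∃ μ : YoungDiagram, μ.colLen = f := by
  classical
  have hmem {p : ℕ × ℕ} :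
      p ∈ (Finset.range (f 0) ×ˢ Finset.range N).filter (fun p => p.1 < f p.2) ↔
        p.1 < f p.2 := by
    simp only [Finset.mem_filter, Finset.mem_product, Finset.mem_range, and_iff_right_iff_imp]
    intro h
    exact ⟨h.trans_le (hf (Nat.zero_le _)), lt_of_not_ge fun hk => by have := hf hk; omega⟩
  refine ⟨⟨_, fun p q hqp hp => ?_⟩,
    funext fun k => colLen_eq_of_forall_mem_iff fun i => hmem⟩
  exact hmem.2 (hqp.1.trans_lt ((hmem.1 hp).trans_le (hf hqp.2)))

theorem cells_subset_and_card_sdiff_eq_one_iff :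
    μ.cells ⊆ ν.cells ∧ (ν.cells \ μ.cells).card = 1 ↔
      ∃ j, ν.colLen = μ.colLen + Pi.single j 1 := by
  constructor
  · rintro ⟨hsub, hcard⟩
    obtain ⟨⟨i₀, j₀⟩, hx⟩ := Finset.card_eq_one.1 hcard
    have hnew (i k : ℕ) (hμ : μ.colLen k ≤ i) (hν : i < ν.colLen k) :
        i = i₀ ∧ k = j₀ := by
      rw [← Prod.mk.injEq, ← Finset.mem_singleton, ← hx, Finset.mem_sdiff, mem_cells,
        mem_cells, mem_iff_lt_colLen, mem_iff_lt_colLen]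
      exact ⟨hν, hμ.not_gt⟩
    have h₀ : (i₀, j₀) ∈ ν.cells \ μ.cells := by simp [hx]
    rw [Finset.mem_sdiff, mem_cells, mem_cells, mem_iff_lt_colLen, mem_iff_lt_colLen] at h₀
    refine ⟨j₀, funext fun k => ?_⟩
    have hle : μ.colLen k ≤ ν.colLen k := by
      by_contra! h
      exact (mem_iff_lt_colLen.1 (hsub ((mem_cells _).2 (mem_iff_lt_colLen.2 h)))).false
    have h₁ := hnew (μ.colLen k) k le_rfl
    have h₂ := hnew (μ.colLen k + 1) k (Nat.le_succ _)
    rcases eq_or_ne k j₀ with rfl | hk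
    · simp only [Pi.add_apply, Pi.single_eq_same]; omega
    · simp only [Pi.add_apply, Pi.single_eq_of_ne hk]; omega
  · rintro ⟨j, hj⟩
    have hν (i k : ℕ) : (i, k) ∈ ν ↔ i < μ.colLen k + (Pi.single j 1 : ℕ → ℕ) k := by
      rw [mem_iff_lt_colLen, hj, Pi.add_apply]
    refine ⟨fun ⟨i, k⟩ h => ?_, Finset.card_eq_one.2 ⟨(μ.colLen j, j), ?_⟩⟩
    · rw [mem_cells, hν]; rw [mem_cells, mem_iff_lt_colLen] at h; omega
    · ext ⟨i, k⟩
      simp only [Finset.mem_sdiff, mem_cells, hν, mem_iff_lt_colLen, Finset.mem_singleton,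
        Prod.mk.injEq, Pi.single_apply]
      split_ifs with hk
      · subst hk; omega
      · omega

end YoungDiagram

namespace HookSSYT

variable {m n : ℕ}

theorem colSS_iff_not_rowSS {x y : ℕ} : colSS m x y ↔ ¬ rowSS m y x := by
  unfold colSS rowSS; omega

theorem rowSS_trans {x y z : ℕ} (hxy : rowSS m x y) (hyz : rowSS m y z) : rowSS m x z := by
  unfold rowSS at *; omega

theorem rowSS_of_colSS_of_rowSS {x y z : ℕ} (hxy : colSS m x y) (hyz : rowSS m y z) :
    rowSS m x z := by
  unfold colSS rowSS at *; omega

theorem colSS_of_colSS_of_rowSS {x y z : ℕ} (hxy : colSS m x y) (hyz : rowSS m y z) :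
    colSS m x z := by
  unfold colSS rowSS at *; omega

theorem colSS_of_rowSS_of_colSS {x y z : ℕ} (hxy : rowSS m x y) (hyz : colSS m y z) :
    colSS m x z := by
  unfold colSS rowSS at *; omega

instance : Trans (colSS m) (colSS m) (colSS m) :=
  ⟨fun h₁ h₂ => by unfold colSS at *; omega⟩

section Column

variable {c : List ℕ} {i j x : ℕ}

theorem colSS_getD_of_lt (hc : c.IsChain (colSS m)) (hij : i < j) (hj : j < c.length) :
    colSS m (c.getD i 0) (c.getD j 0) := by
  rw [List.isChain_iff_pairwise, List.pairwise_iff_getElem] at hc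
  rw [List.getD_eq_getElem _ _ hj, List.getD_eq_getElem _ _ (hij.trans hj)]
  exact hc i j _ hj hij

theorem rowSS_getD_of_le (hc : c.IsChain (colSS m)) (hij : i ≤ j) (hj : j < c.length)
    (h : rowSS m (c.getD j 0) x) : rowSS m (c.getD i 0) x := by
  rcases hij.lt_or_eq with hij | rfl
  · exact rowSS_of_colSS_of_rowSS (colSS_getD_of_lt hc hij hj) h
  · exact h

/-- Barred letters (those `< m`) cannot repeat in a column, so its entries climb at least
to `m` along the first `m` rows. -/
theorem min_le_getD (hc : c.IsChain (colSS m)) (hi : i < c.length) : min i m ≤ c.getD i 0 := by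
  induction i with
  | zero => simp
  | succ i ih =>
    have h := (List.isChain_iff_getD (d := 0)).1 hc i hi
    unfold colSS at h
    have := ih (by omega)
    omega

theorem isChain_append_singleton_iff (hc : c.IsChain (colSS m)) (hne : c ≠ []) :
    (c ++ [x]).IsChain (colSS m) ↔ colSS m (c.getD (c.length - 1) 0) x := by
  have hlast : c.getLast? = some (c.getD (c.length - 1) 0) := by
    rw [List.getLast?_eq_some_getLast hne, List.getLast_eq_getElem,
      List.getD_eq_getElem _ _ (by simp [List.length_pos_iff.2 hne])]
  simp [List.isChain_append, hc, hlast]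

end Column

section Bump

variable {c M L : List ℕ} {i r x a : ℕ}

def bumpIndex (m x : ℕ) (c : List ℕ) : ℕ := c.findIdx fun a => decide (rowSS m x a)

theorem bumpIndex_spec (hc : c.IsChain (colSS m)) (hbr : ¬ (c ++ [x]).IsChain (colSS m)) :
    bumpIndex m x c < c.length ∧ rowSS m x (c.getD (bumpIndex m x c) 0) := by
  have hne : c ≠ [] := by rintro rfl; exact hbr (List.isChain_singleton x)
  have hlen : c.length - 1 < c.length := by simp [List.length_pos_iff.2 hne]
  have hlast : rowSS m x (c.getD (c.length - 1) 0) := by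
    rw [isChain_append_singleton_iff hc hne, colSS_iff_not_rowSS, not_not] at hbr
    exact hbr
  have hlt : bumpIndex m x c < c.length :=
    List.findIdx_lt_length_of_exists ⟨_, List.getD_mem hlen, by simpa using hlast⟩
  refine ⟨hlt, ?_⟩
  have := List.findIdx_getElem (w := hlt)
  rw [decide_eq_true_eq] at this
  rwa [List.getD_eq_getElem _ _ hlt]

theorem not_rowSS_of_lt_bumpIndex (h : i < bumpIndex m x c) : ¬ rowSS m x (c.getD i 0) := by
  have hi : i < c.length := h.trans_le (List.findIdx_le_length)
  rw [List.getD_eq_getElem _ _ hi]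
  simpa using List.not_of_lt_findIdx h

theorem isChain_set_bumpIndex (hc : c.IsChain (colSS m))
    (hbr : ¬ (c ++ [x]).IsChain (colSS m)) : (c.set (bumpIndex m x c) x).IsChain (colSS m) := by
  obtain ⟨-, hrow⟩ := bumpIndex_spec hc hbr
  refine List.isChain_set (d := 0) hc (fun i hi => ?_) (fun hi => ?_)
  · exact colSS_iff_not_rowSS.2 (not_rowSS_of_lt_bumpIndex (by omega))
  · exact colSS_of_rowSS_of_colSS hrow (colSS_getD_of_lt hc (by omega) hi)

theorem skewBump_cons_of_isChain {o : ℕ} {T : List (ℕ × List ℕ)}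
    (h : (c ++ [x]).IsChain (colSS m)) : skewBump m x ((o, c) :: T) = (o, c ++ [x]) :: T := by
  simp [skewBump, h]

theorem skewBump_cons_of_not_isChain {o : ℕ} {T : List (ℕ × List ℕ)}
    (h : ¬ (c ++ [x]).IsChain (colSS m)) :
    skewBump m x ((o, c) :: T) =
      (o, c.set (bumpIndex m x c) x) :: skewBump m (c.getD (bumpIndex m x c) 0) T := by
  simp [skewBump, h, bumpIndex]

/-- `r` is the lowest row of the column `L` to the right of which the letter `x` may stand. -/
def IsLastFit (m : ℕ) (L : List ℕ) (x r : ℕ) : Prop :=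
  r < L.length ∧ rowSS m (L.getD r 0) x ∧
    ∀ i, r < i → i < L.length → ¬ rowSS m (L.getD i 0) x

theorem exists_isLastFit (hi : i < L.length) (h : rowSS m (L.getD i 0) x) :
    ∃ r, i ≤ r ∧ IsLastFit m L x r := by
  classical
  set P := fun k => rowSS m (L.getD k 0) x
  have hle : i ≤ Nat.findGreatest P (L.length - 1) := Nat.le_findGreatest (by omega) h
  have hlt : Nat.findGreatest P (L.length - 1) < L.length :=
    (Nat.findGreatest_le _).trans_lt (by omega)
  exact ⟨_, hle, hlt, Nat.findGreatest_spec (P := P) (by omega) h,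
    fun k hk hkL => Nat.findGreatest_is_greatest (P := P) hk (by omega)⟩

theorem IsLastFit.unique {r' : ℕ} (h : IsLastFit m L x r) (h' : IsLastFit m L x r') : r = r' := by
  rcases lt_trichotomy r r' with hr | rfl | hr
  · exact absurd h'.2.1 (h.2.2 r' hr h'.1)
  · rfl
  · exact absurd h.2.1 (h'.2.2 r hr h.1)

/-- This is what makes a bumping step reversible. -/
theorem isLastFit_set (hc : c.IsChain (colSS m)) (hr : r < c.length)
    (hx : rowSS m x (c.getD r 0)) : IsLastFit m (c.set r x) (c.getD r 0) r := by
  refine ⟨by simpa using hr, by rwa [List.getD_set_self hr], fun i hri hi => ?_⟩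
  rw [List.getD_set_of_ne (by omega)]
  rw [List.length_set] at hi
  exact colSS_iff_not_rowSS.1 (colSS_getD_of_lt hc hri hi)

theorem IsLastFit.rowSS_getD (hM : M.IsChain (colSS m)) (h : IsLastFit m M a r) (hri : r < i)
    (hi : i < M.length) : rowSS m (M.getD r 0) (M.getD i 0) := by
  have hcol := colSS_getD_of_lt hM hri hi
  have hnot := h.2.2 i hri hi
  have hfit := h.2.1
  unfold colSS rowSS at *
  omega

theorem IsLastFit.isChain_set (hM : M.IsChain (colSS m)) (h : IsLastFit m M a r) :
    (M.set r a).IsChain (colSS m) :=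
  List.isChain_set (d := 0) hM
    (fun i hi => colSS_of_colSS_of_rowSS (colSS_getD_of_lt hM (by omega) h.1) h.2.1)
    (fun hi => colSS_iff_not_rowSS.2 (h.2.2 _ (by omega) hi))

theorem IsLastFit.not_isChain_append (hM : M.IsChain (colSS m)) (h : IsLastFit m M a r) :
    ¬ (M.set r a ++ [M.getD r 0]).IsChain (colSS m) := by
  have hne : M.set r a ≠ [] :=
    List.ne_nil_of_length_pos (by rw [List.length_set]; exact Nat.zero_lt_of_lt h.1)
  rw [isChain_append_singleton_iff (h.isChain_set hM) hne, colSS_iff_not_rowSS, not_not,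
    List.length_set]
  rcases (Nat.le_sub_one_of_lt h.1).lt_or_eq with hlt | heq
  · rw [List.getD_set_of_ne (by omega)]
    exact h.rowSS_getD hM hlt (by omega)
  · rw [← heq, List.getD_set_self h.1]
    exact h.2.1

theorem IsLastFit.bumpIndex_set (hM : M.IsChain (colSS m)) (h : IsLastFit m M a r) :
    bumpIndex m (M.getD r 0) (M.set r a) = r := by
  rw [bumpIndex, List.findIdx_eq (by simpa using h.1)]
  refine ⟨by simpa using h.2.1, fun i hi => ?_⟩
  rw [List.getElem_set_ne (by omega), ← List.getD_eq_getElem M 0, decide_eq_false_iff_not]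
  exact colSS_iff_not_rowSS.1 (colSS_getD_of_lt hM hi h.1)

theorem IsLastFit.skewBump_cons_set (hM : M.IsChain (colSS m)) (h : IsLastFit m M a r) {o : ℕ}
    {T : List (ℕ × List ℕ)} :
    skewBump m (M.getD r 0) ((o, M.set r a) :: T) = (o, M) :: skewBump m a T := by
  rw [skewBump_cons_of_not_isChain (h.not_isChain_append hM), h.bumpIndex_set hM, List.set_set,
    List.set_getD_self h.1, List.getD_set_self h.1]

end Bump

section Tableau

variable {T : List (ℕ × List ℕ)} {j : ℕ}

/-- The column `c` may stand immediately to the right of the column `L` in a tableau. -/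
def ColumnLE (m : ℕ) (L c : List ℕ) : Prop :=
  c.length ≤ L.length ∧ ∀ i < c.length, rowSS m (L.getD i 0) (c.getD i 0)

def IsColumn (m n : ℕ) (c : List ℕ) : Prop :=
  c ≠ [] ∧ c.IsChain (colSS m) ∧ ∀ a ∈ c, a < m + n

def IsSSYT (m n : ℕ) (T : List (ℕ × List ℕ)) : Prop :=
  (∀ p ∈ T, p.1 = 0 ∧ IsColumn m n p.2) ∧
    ∀ j, ColumnLE m (colAt T j).2 (colAt T (j + 1)).2

def colLength (T : List (ℕ × List ℕ)) (j : ℕ) : ℕ := (colAt T j).2.length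

@[simp] theorem colAt_nil : colAt [] j = (0, []) := rfl

@[simp] theorem colAt_cons_zero (p : ℕ × List ℕ) : colAt (p :: T) 0 = p := rfl

@[simp] theorem colAt_cons_succ (p : ℕ × List ℕ) : colAt (p :: T) (j + 1) = colAt T j := rfl

theorem colAt_of_length_le (h : T.length ≤ j) : colAt T j = (0, []) :=
  List.getD_eq_default _ _ h

theorem colAt_mem (h : j < T.length) : colAt T j ∈ T := List.getD_mem h

@[simp] theorem colLength_cons_zero (p : ℕ × List ℕ) : colLength (p :: T) 0 = p.2.length := rfl

@[simp] theorem colLength_cons_succ (p : ℕ × List ℕ) :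
    colLength (p :: T) (j + 1) = colLength T j := rfl

@[simp] theorem columnLE_nil {L : List ℕ} : ColumnLE m L [] := by simp [ColumnLE]

theorem isSSYT_nil : IsSSYT m n [] := by simp [IsSSYT]

theorem isSSYT_cons_iff {o : ℕ} {c : List ℕ} :
    IsSSYT m n ((o, c) :: T) ↔
      o = 0 ∧ IsColumn m n c ∧ ColumnLE m c (colAt T 0).2 ∧ IsSSYT m n T := by
  simp only [IsSSYT, List.forall_mem_cons]
  constructor
  · rintro ⟨⟨⟨ho, hc⟩, hcols⟩, hadj⟩
    exact ⟨ho, hc, hadj 0, hcols, fun j => hadj (j + 1)⟩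
  · rintro ⟨ho, hc, hc0, hcols, hadj⟩
    exact ⟨⟨⟨ho, hc⟩, hcols⟩, fun j => j.casesOn hc0 hadj⟩

theorem isSSYT_iff : IsSSYT m n T ↔ IsSkewSSYT m n T ∧ ∀ p ∈ T, p.1 = 0 := by
  have hfst (hoff : ∀ p ∈ T, p.1 = 0) (j : ℕ) : (colAt T j).1 = 0 := by
    rcases lt_or_ge j T.length with hj | hj
    · exact hoff _ (colAt_mem hj)
    · rw [colAt_of_length_le hj]
  constructor
  · rintro ⟨hcol, hadj⟩
    have hoff : ∀ p ∈ T, p.1 = 0 := fun p hp => (hcol p hp).1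
    refine ⟨⟨fun p hp => (hcol p hp).2.1, fun p hp => (hcol p hp).2.2.1,
      fun p hp => (hcol p hp).2.2.2, fun j _ => ?_⟩, hoff⟩
    simpa [hfst hoff, ColumnLE] using hadj j
  · rintro ⟨⟨hne, hch, hlt, hadj⟩, hoff⟩
    refine ⟨fun p hp => ⟨hoff p hp, hne p hp, hch p hp, hlt p hp⟩, fun j => ?_⟩
    rcases lt_or_ge (j + 1) T.length with hj | hj
    · simpa [hfst hoff, ColumnLE] using hadj j hj
    · simp [colAt_of_length_le hj]

namespace IsSSYT

variable (hT : IsSSYT m n T)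
include hT

theorem colLength_succ_le (j : ℕ) : colLength T (j + 1) ≤ colLength T j := (hT.2 j).1

theorem antitone_colLength : Antitone (colLength T) :=
  antitone_nat_of_succ_le hT.colLength_succ_le

theorem isChain_colAt (j : ℕ) : (colAt T j).2.IsChain (colSS m) := by
  rcases lt_or_ge j T.length with hj | hj
  · exact (hT.1 _ (colAt_mem hj)).2.2.1
  · simp [colAt_of_length_le hj]

theorem getD_colAt_lt {i : ℕ} (hi : i < colLength T j) : (colAt T j).2.getD i 0 < m + n := by
  have hj : j < T.length := by
    by_contra! hj
    simp [colLength, colAt_of_length_le hj] at hi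
  exact (hT.1 _ (colAt_mem hj)).2.2.2 _ (List.getD_mem hi)

theorem colLength_zero_eq_zero_iff : colLength T 0 = 0 ↔ T = [] := by
  cases T with
  | nil => simp [colLength]
  | cons p T => simpa using (hT.1 p List.mem_cons_self).2.1

theorem colLength_le : colLength T n ≤ m := by
  by_contra! hlen
  have hm (d : ℕ) (hd : d ≤ n) : m < colLength T d := hlen.trans_le (hT.antitone_colLength hd)
  have hdiag (d : ℕ) (hd : d ≤ n) : m + d ≤ (colAt T d).2.getD m 0 := by
    induction d with
    | zero => simpa using min_le_getD (hT.isChain_colAt 0) (hm 0 (Nat.zero_le n))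
    | succ d ih =>
      have hrow := (hT.2 d).2 m (hm (d + 1) hd)
      have := ih (by omega)
      unfold rowSS at hrow
      omega
  have := hT.getD_colAt_lt (hm n le_rfl)
  have := hdiag n le_rfl
  omega

end IsSSYT

end Tableau

section ColumnLE

variable {L c R l : List ℕ} {i y b : ℕ}

theorem ColumnLE.set_right (h : ColumnLE m L c) (hy : rowSS m (L.getD i 0) y) :
    ColumnLE m L (c.set i y) := by
  refine ⟨by simpa using h.1, fun k hk => ?_⟩
  rw [List.length_set] at hk
  rcases eq_or_ne i k with rfl | hne
  · rwa [List.getD_set_self hk]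
  · rw [List.getD_set_of_ne hne]; exact h.2 k hk

theorem ColumnLE.set_left (h : ColumnLE m c R) (hy : i < R.length → rowSS m y (R.getD i 0)) :
    ColumnLE m (c.set i y) R := by
  refine ⟨by simpa using h.1, fun k hk => ?_⟩
  rcases eq_or_ne i k with rfl | hne
  · rw [List.getD_set_self (hk.trans_le h.1)]; exact hy hk
  · rw [List.getD_set_of_ne hne]; exact h.2 k hk

theorem ColumnLE.append_left (h : ColumnLE m c R) : ColumnLE m (c ++ [y]) R :=
  ⟨by simpa using h.1.trans (Nat.le_succ _), fun k hk => by
    rw [List.getD_append _ _ _ _ (hk.trans_le h.1)]; exact h.2 k hk⟩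

theorem ColumnLE.of_append_right {L : List ℕ} (h : ColumnLE m L (l ++ [b])) : ColumnLE m L l :=
  ⟨by have := h.1; simp at this; omega, fun i hi => by
    have := h.2 i (by simp; omega); rwa [List.getD_append _ _ _ _ hi] at this⟩

theorem ColumnLE.of_append_left {R : List ℕ} (h : ColumnLE m (l ++ [b]) R)
    (hR : R.length ≤ l.length) : ColumnLE m l R :=
  ⟨hR, fun i hi => by have := h.2 i hi; rwa [List.getD_append _ _ _ _ (hi.trans_le hR)] at this⟩

end ColumnLE

section Forward

variable {T q : List (ℕ × List ℕ)} {L? : Option (List ℕ)} {o x : ℕ} {c : List ℕ}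

/-- `x` is to be inserted into `T`, to the right of the column `L` (if any) in which `x` has just
been displaced from row `r` by a letter that may stand left of it; `x` must then enter the first
column of `T` at a row `≤ r`. -/
def BumpInput (m n : ℕ) (L? : Option (List ℕ)) (T : List (ℕ × List ℕ)) (x : ℕ) : Prop :=
  IsSSYT m n T ∧ x < m + n ∧
  ∀ L ∈ L?, L.IsChain (colSS m) ∧ ColumnLE m L (colAt T 0).2 ∧
    ∃ r, IsLastFit m L x r ∧ (r < colLength T 0 → rowSS m x ((colAt T 0).2.getD r 0))

def BumpOutput (m n : ℕ) (L? : Option (List ℕ)) (sh : ℕ → ℕ)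
    (q : List (ℕ × List ℕ)) : Prop :=
  IsSSYT m n q ∧ (∃ j, colLength q = sh + Pi.single j 1) ∧
  ∀ L ∈ L?, L.IsChain (colSS m) ∧ ColumnLE m L (colAt q 0).2

theorem colLength_cons_eq_add_single {j o' : ℕ} {c' : List ℕ}
    (h : colLength q = colLength T + Pi.single j 1) (hc : c'.length = c.length) :
    colLength ((o', c') :: q) = colLength ((o, c) :: T) + Pi.single (j + 1) 1 := by
  funext k
  cases k with
  | zero => simp [hc]
  | succ k => simp [h, Pi.single_apply]

theorem bumpInput_tail (hT : IsSSYT m n ((o, c) :: T)) (hbr : ¬ (c ++ [x]).IsChain (colSS m)) :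
    BumpInput m n (some (c.set (bumpIndex m x c) x)) T (c.getD (bumpIndex m x c) 0) := by
  obtain ⟨-, ⟨-, hc, hlt⟩, hcT, hT⟩ := isSSYT_cons_iff.1 hT
  obtain ⟨hidx, hrow⟩ := bumpIndex_spec hc hbr
  refine ⟨hT, hlt _ (List.getD_mem hidx), fun L hL => ?_⟩
  obtain rfl : c.set (bumpIndex m x c) x = L := Option.some_injective _ hL
  exact ⟨isChain_set_bumpIndex hc hbr,
    hcT.set_left fun hi => rowSS_trans hrow (hcT.2 _ hi),
    _, isLastFit_set hc hidx hrow, hcT.2 _⟩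

theorem bumpOutput_nil (h : BumpInput m n L? [] x) :
    BumpOutput m n L? (colLength []) [(0, [x])] := by
  obtain ⟨-, hx, hL⟩ := h
  refine ⟨isSSYT_cons_iff.2 ⟨rfl, ⟨by simp, List.isChain_singleton x, by simpa⟩, by simp,
    isSSYT_nil⟩, ⟨0, ?_⟩, fun L hL' => ?_⟩
  · funext k; cases k <;> simp [colLength]
  · obtain ⟨hLc, -, r, hr, -⟩ := hL L hL'
    refine ⟨hLc, Nat.zero_lt_of_lt hr.1, fun i hi => ?_⟩
    obtain rfl : i = 0 := by simpa using hi
    exact rowSS_getD_of_le hLc (Nat.zero_le r) hr.1 hr.2.1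

theorem bumpOutput_append (h : BumpInput m n L? ((o, c) :: T) x)
    (hbr : (c ++ [x]).IsChain (colSS m)) :
    BumpOutput m n L? (colLength ((o, c) :: T)) ((o, c ++ [x]) :: T) := by
  obtain ⟨hT, hx, hL⟩ := h
  obtain ⟨ho, ⟨-, -, hlt⟩, hcT, hT⟩ := isSSYT_cons_iff.1 hT
  have hlast : (c ++ [x]).getD c.length 0 = x := by simp
  refine ⟨isSSYT_cons_iff.2 ⟨ho, ⟨by simp, hbr, ?_⟩, hcT.append_left, hT⟩, ⟨0, ?_⟩,
    ?_⟩
  · intro a ha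
    rcases List.mem_append.1 ha with ha | ha
    · exact hlt a ha
    · rw [List.mem_singleton.1 ha]; exact hx
  · funext k; cases k <;> simp
  intro L hL'
  obtain ⟨hLc, hLcol, r, hr, hxr⟩ := hL L hL'
  simp only [colAt_cons_zero, colLength_cons_zero] at hLcol hxr ⊢
  have hcr : c.length ≤ r := by
    by_contra! hrc
    have hcol := colSS_getD_of_lt hbr hrc (by simp)
    rw [List.getD_append _ _ _ _ hrc, hlast] at hcol
    exact colSS_iff_not_rowSS.1 hcol (hxr hrc)
  refine ⟨hLc, by simpa using hcr.trans_lt hr.1, fun i hi => ?_⟩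
  rcases (Nat.le_of_lt_succ (by simpa using hi)).lt_or_eq with hi | rfl
  · rw [List.getD_append _ _ _ _ hi]; exact hLcol.2 i hi
  · rw [hlast]; exact rowSS_getD_of_le hLc hcr hr.1 hr.2.1

theorem bumpOutput_replace (h : BumpInput m n L? ((o, c) :: T) x)
    (hbr : ¬ (c ++ [x]).IsChain (colSS m))
    (hq : BumpOutput m n (some (c.set (bumpIndex m x c) x)) (colLength T) q) :
    BumpOutput m n L? (colLength ((o, c) :: T)) ((o, c.set (bumpIndex m x c) x) :: q) := by
  obtain ⟨hT, hx, hL⟩ := h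
  obtain ⟨ho, ⟨-, hc, hlt⟩, -, -⟩ := isSSYT_cons_iff.1 hT
  obtain ⟨hidx, -⟩ := bumpIndex_spec hc hbr
  obtain ⟨hq, ⟨j, hj⟩, hMq⟩ := hq
  have hset : IsColumn m n (c.set (bumpIndex m x c) x) :=
    ⟨List.ne_nil_of_length_pos (by simp; omega), isChain_set_bumpIndex hc hbr,
      fun a ha => (List.mem_or_eq_of_mem_set ha).elim (hlt a) (· ▸ hx)⟩
  refine ⟨isSSYT_cons_iff.2 ⟨ho, hset, (hMq _ rfl).2, hq⟩,
    ⟨j + 1, colLength_cons_eq_add_single hj (by simp)⟩, fun L hL' => ?_⟩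
  obtain ⟨hLc, hLcol, r, hr, hxr⟩ := hL L hL'
  simp only [colAt_cons_zero, colLength_cons_zero] at hLcol hxr ⊢
  have hir : bumpIndex m x c ≤ r := by
    by_contra! hri
    exact not_rowSS_of_lt_bumpIndex hri (hxr (hri.trans hidx))
  exact ⟨hLc, hLcol.set_right (rowSS_getD_of_le hLc hir hr.1 hr.2.1)⟩

theorem bumpOutput_skewBump :
    ∀ {T : List (ℕ × List ℕ)} {L? : Option (List ℕ)} {x : ℕ},
      BumpInput m n L? T x → BumpOutput m n L? (colLength T) (skewBump m x T)
  | [], _, _, h => bumpOutput_nil h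
  | (o, c) :: T, _, x, h => by
    by_cases hbr : (c ++ [x]).IsChain (colSS m)
    · rw [skewBump_cons_of_isChain hbr]
      exact bumpOutput_append h hbr
    · rw [skewBump_cons_of_not_isChain hbr]
      exact bumpOutput_replace h hbr (bumpOutput_skewBump (bumpInput_tail h.1 hbr))

end Forward

section Injective

variable {T T' : List (ℕ × List ℕ)} {L? : Option (List ℕ)} {o o' x x' : ℕ}
  {c c' : List ℕ}

theorem eq_of_set_bumpIndex_eq (hc : c.IsChain (colSS m)) (hc' : c'.IsChain (colSS m))
    (hbr : ¬ (c ++ [x]).IsChain (colSS m)) (hbr' : ¬ (c' ++ [x']).IsChain (colSS m))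
    (hset : c.set (bumpIndex m x c) x = c'.set (bumpIndex m x' c') x')
    (hget : c.getD (bumpIndex m x c) 0 = c'.getD (bumpIndex m x' c') 0) : c = c' ∧ x = x' := by
  set i := bumpIndex m x c
  set i' := bumpIndex m x' c'
  obtain ⟨hi, hrow⟩ := bumpIndex_spec hc hbr
  obtain ⟨hi', hrow'⟩ := bumpIndex_spec hc' hbr'
  have hfit := isLastFit_set hc hi hrow
  rw [hset, hget] at hfit
  have hii : i = i' := hfit.unique (isLastFit_set hc' hi' hrow')
  constructor
  · calc c = (c.set i x).set i (c.getD i 0) := by rw [List.set_set, List.set_getD_self hi]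
      _ = (c'.set i' x').set i' (c'.getD i' 0) := by rw [hset, hget, hii]
      _ = c' := by rw [List.set_set, List.set_getD_self hi']
  · calc x = (c.set i x).getD i 0 := (List.getD_set_self hi x).symm
      _ = (c'.set i' x').getD i' 0 := by rw [hset, hii]
      _ = x' := List.getD_set_self hi' x'

theorem eq_of_skewBump_cons_eq (h : BumpInput m n L? ((o, c) :: T) x)
    (h' : BumpInput m n L? ((o', c') :: T') x')
    (hlen : colLength ((o, c) :: T) = colLength ((o', c') :: T'))
    (ih : ∀ {M : List ℕ} {y y' : ℕ}, BumpInput m n (some M) T y →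
      BumpInput m n (some M) T' y' → skewBump m y T = skewBump m y' T' → T = T' ∧ y = y')
    (heq : skewBump m x ((o, c) :: T) = skewBump m x' ((o', c') :: T')) :
    (o, c) :: T = (o', c') :: T' ∧ x = x' := by
  obtain ⟨rfl, ⟨-, hc, -⟩, -⟩ := isSSYT_cons_iff.1 h.1
  obtain ⟨rfl, ⟨-, hc', -⟩, -⟩ := isSSYT_cons_iff.1 h'.1
  have hcc : c.length = c'.length := congrFun hlen 0
  have hhead := congrArg (fun q => colLength q 0) heq
  by_cases hb : (c ++ [x]).IsChain (colSS m) <;> by_cases hb' : (c' ++ [x']).IsChain (colSS m)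
  · rw [skewBump_cons_of_isChain hb, skewBump_cons_of_isChain hb'] at heq
    simp only [List.cons.injEq, Prod.mk.injEq, true_and] at heq
    obtain ⟨rfl, hxx⟩ := List.append_inj heq.1 hcc
    exact ⟨by rw [heq.2], List.singleton_inj.1 hxx⟩
  · simp [skewBump_cons_of_isChain hb, skewBump_cons_of_not_isChain hb'] at hhead; omega
  · simp [skewBump_cons_of_isChain hb', skewBump_cons_of_not_isChain hb] at hhead; omega
  · rw [skewBump_cons_of_not_isChain hb, skewBump_cons_of_not_isChain hb'] at heq
    simp only [List.cons.injEq, Prod.mk.injEq, true_and] at heq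
    obtain ⟨rfl, hyy⟩ := ih (heq.1 ▸ bumpInput_tail h.1 hb) (bumpInput_tail h'.1 hb') heq.2
    obtain ⟨rfl, rfl⟩ := eq_of_set_bumpIndex_eq hc hc' hb hb' heq.1 hyy
    exact ⟨rfl, rfl⟩

theorem eq_of_skewBump_eq :
    ∀ {T T' : List (ℕ × List ℕ)} {L? : Option (List ℕ)} {x x' : ℕ},
      BumpInput m n L? T x → BumpInput m n L? T' x' → colLength T = colLength T' →
      skewBump m x T = skewBump m x' T' → T = T' ∧ x = x'
  | [], _, _, _, _, _, h', hlen, heq => by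
    obtain rfl := h'.1.colLength_zero_eq_zero_iff.1 (congrFun hlen 0).symm
    simpa [skewBump] using heq
  | _ :: _, [], _, _, _, h, _, hlen, _ =>
    absurd (h.1.colLength_zero_eq_zero_iff.1 (congrFun hlen 0)) (List.cons_ne_nil _ _)
  | (_, _) :: _, (_, _) :: _, _, _, _, h, h', hlen, heq =>
    eq_of_skewBump_cons_eq h h' hlen
      (fun hy hy' => eq_of_skewBump_eq hy hy' (funext fun k => congrFun hlen (k + 1))) heq

end Injective

section Surjective

variable {q T rest : List (ℕ × List ℕ)} {L? : Option (List ℕ)} {sh : ℕ → ℕ}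
  {o a b r j : ℕ} {l M : List ℕ}

/-- Serves both preimages of a box added to the first column `l ++ [b]`: `T = []` when `l = []`,
and `T` with first column `l` otherwise. -/
theorem bumpInput_of_colAt_eq (hT : IsSSYT m n T) (hb : b < m + n) (hTl : (colAt T 0).2 = l)
    (hL : ∀ L ∈ L?, L.IsChain (colSS m) ∧ ColumnLE m L (l ++ [b])) :
    BumpInput m n L? T b := by
  refine ⟨hT, hb, fun L hL' => ?_⟩
  obtain ⟨hLc, hLl⟩ := hL L hL'
  have hrow : rowSS m (L.getD l.length 0) b := by simpa using hLl.2 l.length (by simp)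
  obtain ⟨r, hlr, hr⟩ :=
    exists_isLastFit ((Nat.lt_succ_self _).trans_le (by simpa using hLl.1)) hrow
  refine ⟨hLc, hTl ▸ hLl.of_append_right, r, hr, fun hrT => ?_⟩
  rw [colLength, hTl] at hrT
  omega

theorem exists_skewBump_eq_append (hsh : Antitone sh)
    (hq : BumpOutput m n L? sh ((o, l ++ [b]) :: rest))
    (hj : colLength ((o, l ++ [b]) :: rest) = sh + Pi.single 0 1) :
    ∃ T x, BumpInput m n L? T x ∧ colLength T = sh ∧
      skewBump m x T = (o, l ++ [b]) :: rest := by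
  obtain ⟨hq, -, hLq⟩ := hq
  obtain ⟨ho, ⟨-, hM, hlt⟩, hMr, hrest⟩ := isSSYT_cons_iff.1 hq
  have hl : l.length = sh 0 := by simpa using congrFun hj 0
  have hrl (k : ℕ) : colLength rest k = sh (k + 1) := by
    simpa [Pi.single_apply] using congrFun hj (k + 1)
  have hb : b < m + n := hlt b (by simp)
  rcases eq_or_ne l [] with rfl | hne
  · have hsh0 (k : ℕ) : sh k = 0 := Nat.le_zero.1 ((hsh (Nat.zero_le k)).trans_eq hl.symm)
    obtain rfl : rest = [] := hrest.colLength_zero_eq_zero_iff.1 ((hrl 0).trans (hsh0 1))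
    refine ⟨[], b, bumpInput_of_colAt_eq isSSYT_nil hb rfl hLq, funext fun k => ?_, ?_⟩
    · simp [colLength, hsh0]
    · simp [skewBump, ho]
  · have hcol : IsColumn m n l :=
      ⟨hne, (List.isChain_append.1 hM).1, fun a ha => hlt a (List.mem_append_left _ ha)⟩
    have hlr : ColumnLE m l (colAt rest 0).2 :=
      hMr.of_append_left (by rw [hl]; exact (hrl 0).trans_le (hsh (Nat.zero_le 1)))
    refine ⟨(o, l) :: rest, b,
      bumpInput_of_colAt_eq (isSSYT_cons_iff.2 ⟨ho, hcol, hlr, hrest⟩) hb rfl hLq,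
      funext fun k => ?_, skewBump_cons_of_isChain hM⟩
    cases k <;> simp [hl, hrl]

theorem BumpOutput.tail (hq : BumpOutput m n L? sh ((o, M) :: rest))
    (hj : colLength ((o, M) :: rest) = sh + Pi.single (j + 1) 1) :
    BumpOutput m n (some M) (fun k => sh (k + 1)) rest := by
  obtain ⟨-, ⟨-, hM, -⟩, hMr, hrest⟩ := isSSYT_cons_iff.1 hq.1
  refine ⟨hrest, ⟨j, funext fun k => ?_⟩, fun L hL => ?_⟩
  · simpa [Pi.single_apply] using congrFun hj (k + 1)
  · obtain rfl : M = L := Option.some_injective _ hL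
    exact ⟨hM, hMr⟩

theorem bumpInput_cons_set (hq : BumpOutput m n L? sh ((o, M) :: rest))
    (hT : BumpInput m n (some M) T a) (hr : IsLastFit m M a r)
    (har : r < colLength T 0 → rowSS m a ((colAt T 0).2.getD r 0)) :
    BumpInput m n L? ((o, M.set r a) :: T) (M.getD r 0) := by
  obtain ⟨ho, ⟨-, hM, hlt⟩, -, -⟩ := isSSYT_cons_iff.1 hq.1
  obtain ⟨hT, ha, hMT⟩ := hT
  have hcol : IsColumn m n (M.set r a) :=
    ⟨List.ne_nil_of_length_pos (by simpa using Nat.zero_lt_of_lt hr.1), hr.isChain_set hM,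
      fun x hx => (List.mem_or_eq_of_mem_set hx).elim (hlt x) (· ▸ ha)⟩
  refine ⟨isSSYT_cons_iff.2 ⟨ho, hcol, (hMT M rfl).2.1.set_left har, hT⟩,
    hlt _ (List.getD_mem hr.1), fun L hL => ?_⟩
  obtain ⟨hLc, hLM⟩ := hq.2.2 L hL
  simp only [colAt_cons_zero] at hLM ⊢
  obtain ⟨r', hrr', hr'⟩ := exists_isLastFit (hr.1.trans_le hLM.1) (hLM.2 r hr.1)
  refine ⟨hLc, hLM.set_right (rowSS_trans (hLM.2 r hr.1) hr.2.1), r', hr', fun hr'M => ?_⟩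
  rw [colLength_cons_zero, List.length_set] at hr'M
  rcases hrr'.lt_or_eq with hlt' | rfl
  · rw [List.getD_set_of_ne hlt'.ne]; exact hr.rowSS_getD hM hlt' hr'M
  · rw [List.getD_set_self hr.1]; exact hr.2.1

theorem exists_skewBump_eq :
    ∀ {q : List (ℕ × List ℕ)} {L? : Option (List ℕ)} {sh : ℕ → ℕ}, Antitone sh →
      BumpOutput m n L? sh q →
        ∃ T x, BumpInput m n L? T x ∧ colLength T = sh ∧ skewBump m x T = q
  | [], _, _, _, ⟨_, ⟨j, hj⟩, _⟩ => by simpa [colLength] using congrFun hj j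
  | (o, M) :: rest, _, sh, hsh, hq => by
    obtain ⟨j, hj⟩ := hq.2.1
    obtain ⟨-, ⟨hne, hM, -⟩, -, -⟩ := isSSYT_cons_iff.1 hq.1
    cases j with
    | zero =>
      obtain ⟨l, b, rfl⟩ := (List.eq_nil_or_concat' M).resolve_left hne
      exact exists_skewBump_eq_append hsh hq hj
    | succ j =>
      obtain ⟨T, a, hT, hTsh, rfl⟩ :=
        exists_skewBump_eq (fun _ _ hk => hsh (Nat.succ_le_succ hk)) (hq.tail hj)
      obtain ⟨r, hr, har⟩ := (hT.2.2 M rfl).2.2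
      refine ⟨_, _, bumpInput_cons_set hq hT hr har, funext fun k => ?_,
        hr.skewBump_cons_set hM⟩
      cases k with
      | zero => simpa using congrFun hj 0
      | succ k => exact congrFun hTsh k

end Surjective

theorem exists_youngDiagram {q : List (ℕ × List ℕ)} {Y₀ : YoungDiagram} {j : ℕ}
    (hq : IsSSYT m n q) (hj : colLength q = Y₀.colLen + Pi.single j 1) :
    ∃ Y : YoungDiagram, Y₀.cells ⊆ Y.cells ∧ (Y.cells \ Y₀.cells).card = 1 ∧
      Y.rowLen m ≤ n ∧ ∀ k, colLength q k = Y.colLen k := by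
  obtain ⟨Y, hY⟩ := YoungDiagram.exists_colLen_eq hq.antitone_colLength (N := q.length)
    (by simp [colLength, colAt_of_length_le])
  obtain ⟨hsub, hcard⟩ :=
    YoungDiagram.cells_subset_and_card_sdiff_eq_one_iff.2 ⟨j, hY.trans hj⟩
  exact ⟨Y, hsub, hcard, YoungDiagram.rowLen_le_iff_colLen_le.2 (hY ▸ hq.colLength_le),
    congrFun hY.symm⟩

end HookSSYT

open HookSSYT

theorem bump_bijOn_general (m n : ℕ) (Y₀ : YoungDiagram) :
    Set.BijOn (fun p : List (ℕ × List ℕ) × ℕ => skewBump m p.2 p.1)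
      {p : List (ℕ × List ℕ) × ℕ | IsSkewSSYT m n p.1 ∧
        (∀ c ∈ p.1, c.1 = 0) ∧
        (∀ j, ((colAt p.1 j).2).length = Y₀.colLen j) ∧ p.2 < m + n}
      {q : List (ℕ × List ℕ) | IsSkewSSYT m n q ∧ (∀ c ∈ q, c.1 = 0) ∧
        ∃ Y : YoungDiagram, Y₀.cells ⊆ Y.cells ∧ (Y.cells \ Y₀.cells).card = 1 ∧
          Y.rowLen m ≤ n ∧ ∀ j, ((colAt q j).2).length = Y.colLen j} := by
  refine ⟨?_, ?_, ?_⟩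
  · rintro ⟨T, x⟩ ⟨hT, hoff, hTY, hx⟩
    obtain ⟨hq, ⟨j, hj⟩, -⟩ :=
      bumpOutput_skewBump (L? := none) ⟨isSSYT_iff.2 ⟨hT, hoff⟩, hx, by simp⟩
    have hTY : colLength T = Y₀.colLen := funext hTY
    exact ⟨(isSSYT_iff.1 hq).1, (isSSYT_iff.1 hq).2, exists_youngDiagram hq (hTY ▸ hj)⟩
  · rintro ⟨T, x⟩ ⟨hT, hoff, hTY, hx⟩ ⟨T', x'⟩ ⟨hT', hoff', hTY', hx'⟩ heq
    obtain ⟨rfl, rfl⟩ := eq_of_skewBump_eq (L? := none)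
      ⟨isSSYT_iff.2 ⟨hT, hoff⟩, hx, by simp⟩ ⟨isSSYT_iff.2 ⟨hT', hoff'⟩, hx', by simp⟩
      (funext fun k => (hTY k).trans (hTY' k).symm) heq
    rfl
  · rintro q ⟨hq, hoff, Y, hsub, hcard, -, hqY⟩
    obtain ⟨j, hj⟩ := YoungDiagram.cells_subset_and_card_sdiff_eq_one_iff.1 ⟨hsub, hcard⟩
    obtain ⟨T, x, ⟨hT, hx, -⟩, hTY, rfl⟩ :=
      exists_skewBump_eq (L? := none) (fun a b h => Y₀.colLen_anti a b h)
        ⟨isSSYT_iff.2 ⟨hq, hoff⟩, ⟨j, (funext hqY).trans hj⟩, by simp⟩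
    exact ⟨(T, x), ⟨(isSSYT_iff.1 hT).1, (isSSYT_iff.1 hT).2, congrFun hTY, hx⟩, rfl⟩

/-- Theorem 4.18 of Benkart–Kang–Kashiwara: for an `(m,n)`-hook Young diagram
`Y₀`, the column bumping map `T ⊗ c ↦ bump(T, c)` is a bijection from
`B(Y₀) × B` onto `⊔_{Y ∈ 𝒴} B(Y)`, where `𝒴` is the set of `(m,n)`-hook
Young diagrams obtained from `Y₀` by adding one box at a co-corner.  (A
straight tableau is presented column-wise, with all column tops at row 0 and
column lengths given by `Y.colLen`.) -/
theorem bump_bijOn (m n : ℕ) (Y₀ : YoungDiagram) (hY₀ : Y₀.rowLen m ≤ n) :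
    Set.BijOn (fun p : List (ℕ × List ℕ) × ℕ => skewBump m p.2 p.1)
      {p : List (ℕ × List ℕ) × ℕ | IsSkewSSYT m n p.1 ∧
        (∀ c ∈ p.1, c.1 = 0) ∧
        (∀ j, ((colAt p.1 j).2).length = Y₀.colLen j) ∧ p.2 < m + n}
      {q : List (ℕ × List ℕ) | IsSkewSSYT m n q ∧ (∀ c ∈ q, c.1 = 0) ∧
        ∃ Y : YoungDiagram, Y₀.cells ⊆ Y.cells ∧ (Y.cells \ Y₀.cells).card = 1 ∧
          Y.rowLen m ≤ n ∧ ∀ j, ((colAt q j).2).length = Y.colLen j} :=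
  bump_bijOn_general m n Y₀
end
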